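/- arXiv:1811.11000 — 3 statements merged into one kernel-verified Lean document; each statement's English description precedes it below -/
import Mathlib

section
/- For every infinite subset R ⊆ ℕ, the closure of {ι(n) : n ∈ R} in E₀(ℕ) is uncountable. Consequently, E₀(ℕ) is not metrizable. -/
open Filter Set Topology

namespace Anqie

variable {X : Type*} [TopologicalSpace X]

/-- `𝒰` is an open cover of `X`. -/
def IsOpenCover (𝒰 : Set (Set X)) : Prop :=
  (∀ U ∈ 𝒰, IsOpen U) ∧ ⋃₀ 𝒰 = Set.univ

/-- The common refinement `𝒰 ∨ T⁻¹ 𝒰 ∨ ⋯ ∨ T^{-(n-1)} 𝒰`. -/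
def iterJoin (T : X → X) (𝒰 : Set (Set X)) (n : ℕ) : Set (Set X) :=
  {V | ∃ u : Fin n → Set X, (∀ j, u j ∈ 𝒰) ∧ V = ⋂ j : Fin n, T^[(j : ℕ)] ⁻¹' u j}

/-- The minimal cardinality of a finite subcover of `𝒱` (junk value `0` if none exists). -/
noncomputable def coverNum (𝒱 : Set (Set X)) : ℕ :=
  sInf {k | ∃ F : Finset (Set X), (↑F : Set (Set X)) ⊆ 𝒱 ∧
    ⋃₀ (↑F : Set (Set X)) = Set.univ ∧ F.card = k}

/-- The Adler–Konheim–McAndrew entropy of `T` relative to the open cover `𝒰`. -/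
noncomputable def coverEntropy (T : X → X) (𝒰 : Set (Set X)) : EReal :=
  Filter.atTop.limsup fun n : ℕ =>
    ((Real.log (coverNum (iterJoin T 𝒰 n)) / n : ℝ) : EReal)

/-- The Adler–Konheim–McAndrew topological entropy of `T`, via open covers. -/
noncomputable def entropy (T : X → X) : EReal :=
  ⨆ 𝒰 ∈ {𝒰 : Set (Set X) | IsOpenCover 𝒰}, coverEntropy T 𝒰

/-- The set of forward-orbit sequences of `f : ℕ → X` inside `X^ℕ`. -/
def orbitSet (f : ℕ → X) : Set (ℕ → X) :=
  {ω | ∃ n : ℕ, ∀ k : ℕ, ω k = f (n + k)}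

/-- `X_f`, the closure of the set of orbit sequences in the product topology. -/
def orbitClosure (f : ℕ → X) : Set (ℕ → X) := closure (orbitSet f)

lemma shift_mem_orbitClosure (f : ℕ → X) {ω : ℕ → X} (hω : ω ∈ orbitClosure f) :
    (fun k => ω (k + 1)) ∈ orbitClosure f := by
  have hcont : Continuous fun ω : ℕ → X => fun k => ω (k + 1) :=
    continuous_pi fun k => continuous_apply (k + 1)
  have hmaps : MapsTo (fun ω : ℕ → X => fun k => ω (k + 1)) (orbitSet f) (orbitSet f) := by
    rintro ω ⟨n, hn⟩
    refine ⟨n + 1, fun k => ?_⟩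
    show ω (k + 1) = f (n + 1 + k)
    rw [hn (k + 1)]; congr 1; omega
  exact map_mem_closure hcont hω hmaps

/-- `B_f`, the left shift restricted to `X_f`. -/
def shiftOn (f : ℕ → X) : orbitClosure f → orbitClosure f :=
  fun ω => ⟨fun k => (ω : ℕ → X) (k + 1), shift_mem_orbitClosure f ω.2⟩

/-- The anqie entropy of a map `f : ℕ → X`: the AKM topological entropy of the
left shift on `X_f`. -/
noncomputable def AE (f : ℕ → X) : EReal := entropy (shiftOn f)

end Anqie

namespace Anqie

/-- The elements of `E₀`: bounded arithmetic functions with zero anqie entropy. -/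
abbrev E0sub : Type := {f : BoundedContinuousFunction ℕ ℂ // AE ⇑f = 0}

/-- The character space (maximal ideal space) `E₀(ℕ)` of the commutative unital
C*-algebra `E₀`: nonzero multiplicative linear functionals on `E₀`, as a subset of
`E₀ → ℂ` with the topology of pointwise (weak*) convergence. -/
def CharSpace : Set (E0sub → ℂ) :=
  {φ | (∃ f, φ f ≠ 0) ∧
    (∀ f g h : E0sub, (h : BoundedContinuousFunction ℕ ℂ) =
      (f : BoundedContinuousFunction ℕ ℂ) + g → φ h = φ f + φ g) ∧
    (∀ (c : ℂ) (f g : E0sub), (g : BoundedContinuousFunction ℕ ℂ) =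
      c • (f : BoundedContinuousFunction ℕ ℂ) → φ g = c * φ f) ∧
    (∀ f g h : E0sub, (h : BoundedContinuousFunction ℕ ℂ) =
      (f : BoundedContinuousFunction ℕ ℂ) * g → φ h = φ f * φ g)}

end Anqie

namespace Anqie

lemma entropy_of_subsingleton {Y : Type*} [TopologicalSpace Y] [Nonempty Y]
    [Subsingleton Y] (T : Y → Y) : entropy T = 0 := by
  have key : ∀ 𝒰 : Set (Set Y), IsOpenCover 𝒰 → coverEntropy T 𝒰 = 0 := by
    intro 𝒰 h𝒰
    have hnum : ∀ n : ℕ, coverNum (iterJoin T 𝒰 n) ≤ 1 := by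
      intro n
      obtain ⟨y⟩ := ‹Nonempty Y›
      obtain ⟨U, hU𝒰, hyU⟩ : ∃ U ∈ 𝒰, y ∈ U := by
        have : y ∈ ⋃₀ 𝒰 := h𝒰.2 ▸ Set.mem_univ y
        exact this
      have hUuniv : U = Set.univ := by
        apply Set.eq_univ_of_forall
        intro z
        rwa [Subsingleton.elim z y]
      have hmem : (Set.univ : Set Y) ∈ iterJoin T 𝒰 n := by
        refine ⟨fun _ => U, fun _ => hU𝒰, ?_⟩
        rw [hUuniv]
        simp
      apply Nat.sInf_le
      refine ⟨{Set.univ}, ?_, ?_, ?_⟩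
      · simpa using hmem
      · simp
      · simp
    have hfun : (fun n : ℕ =>
        ((Real.log (coverNum (iterJoin T 𝒰 n)) / n : ℝ) : EReal)) = fun _ => (0 : EReal) := by
      funext n
      have h01 := Nat.le_one_iff_eq_zero_or_eq_one.mp (hnum n)
      rcases h01 with h | h <;> simp [h]
    rw [coverEntropy, hfun]
    exact Filter.limsup_const 0
  have hcover : IsOpenCover ({Set.univ} : Set (Set Y)) := by
    constructor
    · intro U hU
      simp only [Set.mem_singleton_iff] at hU
      subst hU
      exact isOpen_univ
    · simp
  apply le_antisymm
  · apply iSup₂_le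
    intro 𝒰 h𝒰
    exact le_of_eq (key 𝒰 h𝒰)
  · have : (0 : EReal) = coverEntropy T {Set.univ} := (key _ hcover).symm
    rw [this]
    exact le_iSup₂ (f := fun 𝒰 (_ : 𝒰 ∈ {𝒰 : Set (Set Y) | IsOpenCover 𝒰}) =>
      coverEntropy T 𝒰) ({Set.univ} : Set (Set Y)) hcover

lemma orbitSet_const (c : ℂ) : orbitSet (fun _ : ℕ => c) = {fun _ => c} := by
  ext ω
  simp only [orbitSet, Set.mem_setOf_eq, Set.mem_singleton_iff]
  constructor
  · rintro ⟨n, hn⟩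
    exact funext hn
  · rintro rfl
    exact ⟨0, fun k => rfl⟩

lemma AE_const (c : ℂ) : AE (fun _ : ℕ => c) = 0 := by
  have hset : orbitClosure (fun _ : ℕ => c) = {fun _ => c} := by
    rw [orbitClosure, orbitSet_const, closure_singleton]
  haveI : Subsingleton ↥(orbitClosure (fun _ : ℕ => c)) := by
    rw [hset]
    exact Set.subsingleton_singleton.coe_sort
  haveI : Nonempty ↥(orbitClosure (fun _ : ℕ => c)) :=
    ⟨⟨_, subset_closure ⟨0, fun k => rfl⟩⟩⟩
  exact entropy_of_subsingleton _

end Anqie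

namespace Anqie

/-- The evaluation character `ι(n) : f ↦ f(n)`, as a point of `E₀(ℕ)`. -/
noncomputable def evalChar (n : ℕ) : ↥CharSpace :=
  ⟨fun f => (f : BoundedContinuousFunction ℕ ℂ) n, by
    refine ⟨⟨⟨1, ?_⟩, ?_⟩, ?_, ?_, ?_⟩
    · rw [BoundedContinuousFunction.coe_one]
      exact AE_const 1
    · simp
    · rintro f g h hfg
      show (h : BoundedContinuousFunction ℕ ℂ) n =
        (f : BoundedContinuousFunction ℕ ℂ) n + (g : BoundedContinuousFunction ℕ ℂ) n
      rw [hfg]; simp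
    · rintro c f g hfg
      show (g : BoundedContinuousFunction ℕ ℂ) n = c * (f : BoundedContinuousFunction ℕ ℂ) n
      rw [hfg]; simp [smul_eq_mul]
    · rintro f g h hfg
      show (h : BoundedContinuousFunction ℕ ℂ) n =
        (f : BoundedContinuousFunction ℕ ℂ) n * (g : BoundedContinuousFunction ℕ ℂ) n
      rw [hfg]; simp⟩

end Anqie

/-!
Along a sequence `s₀ < s₁ < ⋯` in `R` with `2 sₖ < sₖ₊₁`, put values `vₖ` dense in `[0, 1]`
and `0` elsewhere. A window of length `N` starting beyond `N` then meets at most one `sₖ`, so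
after rounding the values to a finite `ε`-net the function has only `O(N²)` distinct windows;
polynomial window complexity makes the refined covers of the orbit closure grow subexponentially,
so the function lies in `E₀`. Limits of `ι(sₖ)` along ultrafilters take every value of `[0, 1]`
at this function, giving continuum many points in the closure of `ι(R)`. In a metrizable space a
sequence in `ι(ℕ)` converging outside `ι(ℕ)` would instead yield an infinite `R` for which the
closure of `{ι(n) : n ∈ R}` is countable.
-/

lemma tendsto_log_add_div_atTop (c : ℝ) :
    Tendsto (fun n : ℕ => Real.log (n + c) / n) atTop (𝓝 0) :=
  ((Real.tendsto_pow_log_div_mul_add_atTop 1 (-c) 1 one_ne_zero).comp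
    (tendsto_atTop_add_const_right atTop c tendsto_natCast_atTop_atTop)).congr fun n => by simp

lemma exists_infinite_countable_closure_image_of_not_isClosed_range {X : Type*}
    [TopologicalSpace X] [FirstCountableTopology X] [T2Space X] {ι : ℕ → X}
    (h : ¬ IsClosed (range ι)) : ∃ R : Set ℕ, R.Infinite ∧ (closure (ι '' R)).Countable := by
  obtain ⟨φ, hφ, hφι⟩ := not_subset.mp (mt isClosed_of_closure_subset h)
  obtain ⟨x, hxι, hx⟩ := mem_closure_iff_seq_limit.mp hφ
  choose n hn using hxι
  have hrange : ι '' range n = range x := by rw [← range_comp]; exact congrArg range (funext hn)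
  have hclosure : closure (range x) ⊆ insert φ (range x) :=
    hx.isCompact_insert_range.isClosed.closure_subset_iff.mpr (subset_insert _ _)
  refine ⟨range n, fun hfin => hφι ?_, hrange ▸ ((countable_range x).insert φ).mono hclosure⟩
  have hφx : φ ∈ closure (range x) := mem_closure_of_tendsto hx (.of_forall mem_range_self)
  rw [← hrange, (hfin.image ι).isClosed.closure_eq] at hφx
  exact image_subset_range _ _ hφx

namespace Anqie

lemma coverEntropy_eq_zero_of_coverNum_le_pow {Y : Type*} {T : Y → Y} {𝒰 : Set (Set Y)}
    (c d : ℕ) (h : ∀ n, coverNum (iterJoin T 𝒰 n) ≤ (n + c) ^ d) : coverEntropy T 𝒰 = 0 := by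
  have hlog : ∀ n : ℕ, Real.log (coverNum (iterJoin T 𝒰 n)) ≤ d * Real.log (n + c) := by
    intro n
    rw [← Real.log_pow]
    rcases Nat.eq_zero_or_pos (coverNum (iterJoin T 𝒰 n)) with h0 | hpos
    · rw [h0, Nat.cast_zero, Real.log_zero]
      exact_mod_cast Real.log_natCast_nonneg ((n + c) ^ d)
    · exact Real.log_le_log (by exact_mod_cast hpos) (by exact_mod_cast h n)
  have hlim : Tendsto (fun n : ℕ => Real.log (coverNum (iterJoin T 𝒰 n)) / n) atTop (𝓝 0) := by
    refine tendsto_of_tendsto_of_tendsto_of_le_of_le tendsto_const_nhds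
      (by simpa using (tendsto_log_add_div_atTop c).const_mul (d : ℝ))
      (fun n => div_nonneg (Real.log_natCast_nonneg _) n.cast_nonneg) fun n => ?_
    rw [mul_div_assoc']
    exact div_le_div_of_nonneg_right (hlog n) n.cast_nonneg
  exact (EReal.tendsto_coe.mpr hlim).limsup_eq

section Entropy

variable {Y : Type*} [TopologicalSpace Y]

lemma isOpenCover_singleton_univ : IsOpenCover ({univ} : Set (Set Y)) :=
  ⟨fun _ hU => hU ▸ isOpen_univ, sUnion_singleton _⟩

lemma entropy_eq_zero {T : Y → Y} (h : ∀ 𝒰, IsOpenCover 𝒰 → coverEntropy T 𝒰 = 0) :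
    entropy T = 0 :=
  le_antisymm (iSup₂_le fun 𝒰 h𝒰 => (h 𝒰 h𝒰).le)
    ((h _ isOpenCover_singleton_univ).ge.trans (le_iSup₂_of_le _ isOpenCover_singleton_univ le_rfl))

end Entropy

section Cylinders

variable {X : Type*} [PseudoMetricSpace X]

lemma exists_cylinder_subset_of_mem_uniformity {W : Set ((ℕ → X) × (ℕ → X))}
    (hW : W ∈ uniformity (ℕ → X)) :
    ∃ L, ∃ ε > 0, ∀ x y : ℕ → X, (∀ i < L, dist (x i) (y i) < ε) → (x, y) ∈ W := by
  rw [Pi.uniformity] at hW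
  obtain ⟨⟨I, k⟩, ⟨hI, -⟩, hIW⟩ := (Filter.HasBasis.iInf' fun _ =>
    Metric.uniformity_basis_dist_inv_nat_succ.comap _).mem_iff.mp hW
  obtain ⟨L, hL⟩ := (hI.union (hI.image k)).bddAbove
  refine ⟨L + 1, 1 / (L + 1), by positivity, fun x y hxy => hIW (mem_iInter₂.mpr fun i hi => ?_)⟩
  have hiL : i ≤ L := hL (Or.inl hi)
  have hkL : k i ≤ L := hL (Or.inr ⟨i, hi, rfl⟩)
  refine (hxy i (by omega)).trans_le ?_
  gcongr

lemma exists_cylinder_subset_of_isOpenCover {K : Set (ℕ → X)} (hK : IsCompact K)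
    {𝒰 : Set (Set K)} (h𝒰 : IsOpenCover 𝒰) :
    ∃ L, ∃ ε > 0, ∀ x : K, ∃ U ∈ 𝒰, ∀ y : K,
      (∀ i < L, dist ((x : ℕ → X) i) ((y : ℕ → X) i) < ε) → y ∈ U := by
  have : CompactSpace K := isCompact_iff_compactSpace.mp hK
  obtain ⟨V, hV, hVU⟩ := lebesgue_number_lemma_sUnion isCompact_univ h𝒰.1 h𝒰.2.ge
  rw [uniformity_subtype, mem_comap] at hV
  obtain ⟨W, hW, hWV⟩ := hV
  obtain ⟨L, ε, hε, hLW⟩ := exists_cylinder_subset_of_mem_uniformity hW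
  refine ⟨L, ε, hε, fun x => ?_⟩
  obtain ⟨U, hU, hxU⟩ := hVU x (mem_univ x)
  exact ⟨U, hU, fun y hy => hxU (hWV (hLW _ _ hy))⟩

end Cylinders

section Orbits

variable {X : Type*} [PseudoMetricSpace X]

lemma shiftOn_iterate_apply (f : ℕ → X) (j : ℕ) (y : orbitClosure f) (i : ℕ) :
    ((shiftOn f)^[j] y : ℕ → X) i = (y : ℕ → X) (i + j) := by
  induction j generalizing y with
  | zero => rfl
  | succ j ih => rw [Function.iterate_succ_apply, ih]; rfl

lemma isCompact_orbitClosure [ProperSpace X] {f : ℕ → X} (hf : Bornology.IsBounded (range f)) :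
    IsCompact (orbitClosure f) := by
  refine (isCompact_univ_pi fun _ => hf.isCompact_closure).of_isClosed_subset isClosed_closure
    (closure_minimal ?_ (isClosed_set_pi fun _ _ => isClosed_closure))
  rintro ω ⟨n, hn⟩ i -
  exact hn i ▸ subset_closure (mem_range_self _)

lemma exists_dist_lt_of_mem_orbitClosure {f : ℕ → X} {y : ℕ → X} (hy : y ∈ orbitClosure f)
    {δ : ℝ} (hδ : 0 < δ) (N : ℕ) : ∃ m, ∀ i < N, dist (f (m + i)) (y i) < δ := by
  have hopen : IsOpen {z : ℕ → X | ∀ i < N, dist (z i) (y i) < δ} := by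
    simp only [← Finset.mem_range, ofPred_forall]
    exact isOpen_biInter_finset fun i _ =>
      (Metric.isOpen_ball (x := y i) (ε := δ)).preimage (continuous_apply (A := fun _ => X) i)
  obtain ⟨z, hz, m, hm⟩ := mem_closure_iff.mp hy _ hopen fun i _ => by rwa [dist_self]
  exact ⟨m, fun i hi => hm i ▸ hz i hi⟩

lemma coverNum_iterJoin_shiftOn_le {f : ℕ → X} {𝒰 : Set (Set (orbitClosure f))} {L : ℕ} {ε : ℝ}
    (hL : ∀ x : orbitClosure f, ∃ U ∈ 𝒰, ∀ y : orbitClosure f,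
      (∀ i < L, dist ((x : ℕ → X) i) ((y : ℕ → X) i) < ε) → y ∈ U)
    {n : ℕ} {M : Finset ℕ}
    (hM : ∀ y ∈ orbitClosure f, ∃ m ∈ M, ∀ i < n + L, dist (f (m + i)) (y i) < ε) :
    coverNum (iterJoin (shiftOn f) 𝒰 n) ≤ M.card := by
  choose U hU𝒰 hU using fun q => hL ⟨fun k => f (q + k), subset_closure ⟨q, fun _ => rfl⟩⟩
  set V : ℕ → Set (orbitClosure f) := fun m => ⋂ j : Fin n, (shiftOn f)^[j] ⁻¹' U (m + j)
  have hV : ∀ m, V m ∈ iterJoin (shiftOn f) 𝒰 n := fun m => ⟨_, fun j => hU𝒰 _, rfl⟩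
  have hcover : ⋃₀ (M.image V : Set (Set (orbitClosure f))) = univ := by
    refine eq_univ_of_forall fun y => ?_
    obtain ⟨m, hm, hmy⟩ := hM y y.2
    refine ⟨V m, Finset.mem_image_of_mem V hm, mem_iInter.mpr fun j => hU _ _ fun i hi => ?_⟩
    show dist (f (m + j + i)) _ < ε
    rw [shiftOn_iterate_apply, add_assoc, add_comm (j : ℕ)]
    exact hmy _ (by omega)
  calc coverNum (iterJoin (shiftOn f) 𝒰 n) ≤ (M.image V).card :=
        Nat.sInf_le ⟨_, by simpa [subset_def] using fun m _ => hV m, hcover, rfl⟩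
    _ ≤ M.card := Finset.card_image_le

end Orbits

def windows {Y : Type*} (g : ℕ → Y) (N : ℕ) : Set (Fin N → Y) :=
  range fun m i => g (m + i)

lemma exists_finset_windows_eq {Y : Type*} {g : ℕ → Y} {N k : ℕ}
    (h : (windows g N).encard ≤ k) :
    ∃ M : Finset ℕ, M.card ≤ k ∧ ∀ m, ∃ m' ∈ M, ∀ i < N, g (m' + i) = g (m + i) := by
  set word : ℕ → Fin N → Y := fun m i => g (m + i)
  have hfin : (windows g N).Finite := finite_of_encard_le_coe h
  refine ⟨hfin.toFinset.image (Function.invFun word), ?_, fun m => ?_⟩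
  · refine Finset.card_image_le.trans ?_
    rwa [← ENat.natCast_le_natCast, ← hfin.encard_eq_coe_toFinset_card]
  · refine ⟨_, Finset.mem_image_of_mem _ (hfin.mem_toFinset.mpr (mem_range_self m)),
      fun i hi => congrFun (Function.invFun_eq ⟨m, rfl⟩ : word _ = word m) ⟨i, hi⟩⟩

theorem AE_eq_zero_of_approx_by_polynomial_complexity {X : Type*} [PseudoMetricSpace X]
    [ProperSpace X] {f : ℕ → X} (hf : Bornology.IsBounded (range f))
    (happrox : ∀ ε > 0, ∃ g : ℕ → X, (∀ n, dist (f n) (g n) < ε) ∧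
      ∃ c d : ℕ, ∀ N, (windows g N).encard ≤ ((N + c) ^ d : ℕ)) :
    AE f = 0 := by
  refine entropy_eq_zero fun 𝒰 h𝒰 => ?_
  obtain ⟨L, ε, hε, hL⟩ := exists_cylinder_subset_of_isOpenCover (isCompact_orbitClosure hf) h𝒰
  obtain ⟨g, hfg, c, d, hg⟩ := happrox (ε / 3) (by positivity)
  refine coverEntropy_eq_zero_of_coverNum_le_pow (L + c) d fun n => ?_
  obtain ⟨M, hMcard, hM⟩ := exists_finset_windows_eq (hg (n + L))
  refine (coverNum_iterJoin_shiftOn_le hL fun y hy => ?_).trans (hMcard.trans_eq (by ring))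
  obtain ⟨m, hm⟩ := exists_dist_lt_of_mem_orbitClosure hy (by positivity : 0 < ε / 3) (n + L)
  obtain ⟨m', hm', hgm⟩ := hM m
  refine ⟨m', hm', fun i hi => ?_⟩
  calc dist (f (m' + i)) (y i)
      ≤ dist (f (m' + i)) (g (m' + i)) + dist (g (m + i)) (f (m + i))
          + dist (f (m + i)) (y i) := by
        rw [← hgm i hi]; exact dist_triangle4 _ _ _ _
    _ < ε / 3 + ε / 3 + ε / 3 := by
        gcongr
        exacts [hfg _, dist_comm (f _) _ ▸ hfg _, hm i hi]
    _ = ε := by ring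

section Lacunary

variable {S : Set ℕ}

lemma eq_of_add_mem_of_lacunary (hS : ∀ a ∈ S, ∀ b ∈ S, a < b → 2 * a < b) {N m i j : ℕ}
    (hm : N ≤ m) (hi : i < N) (hj : j < N) (hiS : m + i ∈ S) (hjS : m + j ∈ S) : i = j := by
  by_contra hne
  rcases lt_or_gt_of_ne hne with h | h
  · have := hS _ hiS _ hjS (by omega); omega
  · have := hS _ hjS _ hiS (by omega); omega

lemma encard_windows_le_of_lacunary {Y : Type*} (hS : ∀ a ∈ S, ∀ b ∈ S, a < b → 2 * a < b)
    {g : ℕ → Y} {y₀ : Y} (hg : ∀ n ∉ S, g n = y₀) {k : ℕ} (hk : (range g).encard ≤ k) (N : ℕ) :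
    (windows g N).encard ≤ ((N + (k + 1)) ^ 2 : ℕ) := by
  classical
  set word : ℕ → Fin N → Y := fun m i => g (m + i)
  set bump : Fin N × Y → Fin N → Y := fun p => Function.update (fun _ => y₀) p.1 p.2
  have hsub : windows g N ⊆
      word '' (Finset.range N : Set ℕ) ∪ insert (fun _ => y₀) (bump '' (univ ×ˢ range g)) := by
    rintro _ ⟨m, rfl⟩
    rcases lt_or_ge m N with hmN | hmN
    · exact Or.inl ⟨m, by simpa using hmN, rfl⟩
    by_cases hnone : ∀ t : Fin N, m + t ∉ S
    · exact Or.inr (Or.inl (funext fun i => hg _ (hnone i)))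
    · obtain ⟨t, ht⟩ := not_forall_not.mp hnone
      refine Or.inr (Or.inr ⟨(t, g (m + t)), ⟨mem_univ _, mem_range_self _⟩, funext fun i => ?_⟩)
      rcases eq_or_ne i t with rfl | hit
      · exact Function.update_self ..
      · show Function.update (fun _ => y₀) t (g (m + t)) i = g (m + i)
        rw [Function.update_of_ne hit]
        exact (hg _ fun hiS => hit (Fin.ext (eq_of_add_mem_of_lacunary hS hmN i.2 t.2 hiS ht))).symm
  calc (windows g N).encard
      ≤ N + (N * k + 1) := by
        refine (encard_le_encard hsub).trans ((encard_union_le _ _).trans (add_le_add ?_ ?_))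
        · exact (encard_image_le _ _).trans_eq
            (by rw [encard_coe_eq_coe_finsetCard, Finset.card_range])
        · refine (encard_insert_le _ _).trans ?_
          gcongr
          refine (encard_image_le _ _).trans ?_
          rw [encard_prod, encard_univ, ENat.card_eq_coe_fintype_card, Fintype.card_fin]
          gcongr
    _ ≤ ((N + (k + 1)) ^ 2 : ℕ) := by norm_cast; nlinarith

end Lacunary

lemma exists_finite_range_approx {X : Type*} [PseudoMetricSpace X] {f : ℕ → X}
    (hf : TotallyBounded (range f)) (x₀ : X) {ε : ℝ} (hε : 0 < ε) :
    ∃ g : ℕ → X, (∀ n, dist (f n) (g n) < ε) ∧ (∀ n, f n = x₀ → g n = x₀) ∧ (range g).Finite := by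
  classical
  obtain ⟨t, ht, hft⟩ := Metric.totallyBounded_iff.mp hf ε hε
  choose c hct hfc using fun n => mem_iUnion₂.mp (hft (mem_range_self n))
  refine ⟨fun n => if f n = x₀ then x₀ else c n, fun n => ?_, fun n hn => if_pos hn,
    (ht.insert x₀).subset ?_⟩
  · dsimp only
    split_ifs with hn
    · rwa [hn, dist_self]
    · exact hfc n
  · rintro _ ⟨n, rfl⟩
    dsimp only
    split_ifs
    exacts [mem_insert _ _, mem_insert_of_mem _ (hct n)]

theorem AE_eq_zero_of_lacunary {X : Type*} [PseudoMetricSpace X] [ProperSpace X] {f : ℕ → X}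
    (hf : Bornology.IsBounded (range f)) {S : Set ℕ} (hS : ∀ a ∈ S, ∀ b ∈ S, a < b → 2 * a < b)
    {x₀ : X} (hfS : ∀ n ∉ S, f n = x₀) : AE f = 0 := by
  refine AE_eq_zero_of_approx_by_polynomial_complexity hf fun ε hε => ?_
  have htb : TotallyBounded (range f) :=
    (isCompact_iff_totallyBounded_isComplete.mp hf.isCompact_closure).1.subset subset_closure
  obtain ⟨g, hfg, hgx₀, hgfin⟩ := exists_finite_range_approx htb x₀ hε
  exact ⟨g, hfg, _, 2, encard_windows_le_of_lacunary hS (fun n hn => hgx₀ n (hfS n hn))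
    hgfin.encard_eq_coe_toFinset_card.le⟩

lemma exists_seq_mem_two_mul_lt {R : Set ℕ} (hR : R.Infinite) :
    ∃ s : ℕ → ℕ, (∀ k, s k ∈ R) ∧ ∀ k, 2 * s k < s (k + 1) := by
  choose g hgR hg using fun n => hR.exists_gt n
  refine ⟨fun k => (g ∘ (2 * ·))^[k] (g 0), fun k => ?_, fun k => ?_⟩
  · cases k with
    | zero => exact hgR 0
    | succ k => simp only [Function.iterate_succ_apply', Function.comp_apply]; exact hgR _
  · simp only [Function.iterate_succ_apply', Function.comp_apply]; exact hg _

lemma strictMono_of_two_mul_lt {s : ℕ → ℕ} (hs : ∀ k, 2 * s k < s (k + 1)) : StrictMono s :=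
  strictMono_nat_of_lt_succ fun k => by have := hs k; omega

lemma isBounded_range_extend_const {X : Type*} [PseudoMetricSpace X] (s : ℕ → ℕ) {v : ℕ → X}
    (hv : Bornology.IsBounded (range v)) (x₀ : X) :
    Bornology.IsBounded (range (Function.extend s v fun _ => x₀)) := by
  refine (hv.union (Bornology.isBounded_singleton (x := x₀))).subset
    ((range_extend_subset _ _ _).trans (union_subset_union_right _ ?_))
  rintro _ ⟨_, -, rfl⟩
  rfl

theorem AE_extend_eq_zero {X : Type*} [PseudoMetricSpace X] [ProperSpace X] {s : ℕ → ℕ}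
    (hs : ∀ k, 2 * s k < s (k + 1)) {v : ℕ → X} (hv : Bornology.IsBounded (range v)) (x₀ : X) :
    AE (Function.extend s v fun _ => x₀) = 0 := by
  have hmono := strictMono_of_two_mul_lt hs
  refine AE_eq_zero_of_lacunary (isBounded_range_extend_const s hv x₀) (S := range s) ?_
    fun n hn => Function.extend_apply' _ _ _ hn
  rintro _ ⟨p, rfl⟩ _ ⟨q, rfl⟩ hpq
  exact (hs p).trans_le (hmono.monotone (hmono.lt_iff_lt.mp hpq))

lemma mem_charSpace_of_tendsto {α : Type*} {l : Filter α} [l.NeBot] {φ : α → CharSpace}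
    {Φ : E0sub → ℂ} (h : Tendsto (fun a => (φ a : E0sub → ℂ)) l (𝓝 Φ)) (hΦ : ∃ f, Φ f ≠ 0) :
    Φ ∈ CharSpace := by
  have hlim : ∀ f, Tendsto (fun a => (φ a : E0sub → ℂ) f) l (𝓝 (Φ f)) := tendsto_pi_nhds.mp h
  refine ⟨hΦ, fun f g h hfg => ?_, fun c f g hfg => ?_, fun f g h hfg => ?_⟩
  · exact tendsto_nhds_unique (hlim h)
      (((hlim f).add (hlim g)).congr fun a => ((φ a).2.2.1 f g h hfg).symm)
  · exact tendsto_nhds_unique (hlim g)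
      (((hlim f).const_mul c).congr fun a => ((φ a).2.2.2.1 c f g hfg).symm)
  · exact tendsto_nhds_unique (hlim h)
      (((hlim f).mul (hlim g)).congr fun a => ((φ a).2.2.2.2 f g h hfg).symm)

lemma exists_tendsto_evalChar {α : Type*} (u : Ultrafilter α) (n : α → ℕ) :
    ∃ ψ : CharSpace, Tendsto (fun a => evalChar (n a)) u (𝓝 ψ) := by
  have hK : IsCompact (univ.pi fun f : E0sub =>
      Metric.closedBall (0 : ℂ) ‖(f : BoundedContinuousFunction ℕ ℂ)‖) :=
    isCompact_univ_pi fun _ => isCompact_closedBall _ _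
  obtain ⟨Φ, -, hΦ⟩ := hK.ultrafilter_le_nhds' (u.map fun a => (evalChar (n a) : E0sub → ℂ))
    (Ultrafilter.mem_map.mpr <| univ_mem' fun a f _ =>
      mem_closedBall_zero_iff.mpr (BoundedContinuousFunction.norm_coe_le_norm _ _))
  let one : E0sub := ⟨1, by rw [BoundedContinuousFunction.coe_one]; exact AE_const 1⟩
  have hone : Φ one = 1 :=
    tendsto_nhds_unique ((continuous_apply one).tendsto Φ |>.comp hΦ) tendsto_const_nhds
  exact ⟨⟨Φ, mem_charSpace_of_tendsto hΦ ⟨one, hone ▸ one_ne_zero⟩⟩, tendsto_subtype_rng.mpr hΦ⟩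

lemma closure_image_subset_image_closure_evalChar_image (F : E0sub) (R : Set ℕ) :
    closure ((F : ℕ → ℂ) '' R) ⊆
      (fun ψ : CharSpace => (ψ : E0sub → ℂ) F) '' closure (evalChar '' R) := by
  intro z hz
  obtain ⟨x, hxR, hx⟩ := mem_closure_iff_seq_limit.mp hz
  choose n hnR hnx using hxR
  obtain ⟨ψ, hψ⟩ := exists_tendsto_evalChar (Ultrafilter.of atTop) n
  refine ⟨ψ, mem_closure_of_tendsto hψ (.of_forall fun j => mem_image_of_mem _ (hnR j)), ?_⟩
  have hψF := ((continuous_apply F).comp continuous_subtype_val).tendsto ψ |>.comp hψ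
  exact tendsto_nhds_unique hψF
    ((hx.mono_left (Ultrafilter.of_le _)).congr fun j => (hnx j).symm)

lemma exists_E0sub_Icc_subset_closure_image {R : Set ℕ} (hR : R.Infinite) :
    ∃ F : E0sub, Icc (0 : ℝ) 1 ⊆ (↑) ⁻¹' closure ((F : ℕ → ℂ) '' R) := by
  obtain ⟨s, hsR, hs⟩ := exists_seq_mem_two_mul_lt hR
  set v : ℕ → ℂ := fun k => ((TopologicalSpace.denseSeq unitInterval k : ℝ) : ℂ)
  have hv : Bornology.IsBounded (range v) := by
    refine (isCompact_range (f := fun y : unitInterval => ((y : ℝ) : ℂ))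
      (by fun_prop)).isBounded.subset ?_
    rintro _ ⟨k, rfl⟩
    exact mem_range_self _
  obtain ⟨C, hC⟩ := isBounded_iff_forall_norm_le.mp (isBounded_range_extend_const s hv 0)
  let F : E0sub := ⟨.ofNormedAddCommGroup (Function.extend s v fun _ => 0)
    continuous_of_discreteTopology C (fun n => hC _ (mem_range_self n)), AE_extend_eq_zero hs hv 0⟩
  have hvF : range v ⊆ (F : ℕ → ℂ) '' R := by
    rintro _ ⟨k, rfl⟩
    exact ⟨s k, hsR k, (strictMono_of_two_mul_lt hs).injective.extend_apply v (fun _ => 0) k⟩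
  refine ⟨F, fun x hx => closure_mono hvF ?_⟩
  have := image_closure_subset_closure_image (f := fun y : unitInterval => ((y : ℝ) : ℂ))
    (by fun_prop) ⟨⟨x, hx⟩,
      (TopologicalSpace.denseRange_denseSeq unitInterval).closure_range ▸ mem_univ _, rfl⟩
  rwa [← range_comp] at this

theorem not_countable_closure_evalChar_image {R : Set ℕ} (hR : R.Infinite) :
    ¬ (closure (evalChar '' R)).Countable := fun hc => by
  obtain ⟨F, hF⟩ := exists_E0sub_Icc_subset_closure_image hR
  have hFc : (closure ((F : ℕ → ℂ) '' R)).Countable :=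
    (hc.image _).mono (closure_image_subset_image_closure_evalChar_image F R)
  have := Cardinal.Real.Icc_countable_iff.mp ((hFc.preimage Complex.ofReal_injective).mono hF)
  norm_num at this

end Anqie

/-- For every infinite subset `R ⊆ ℕ`, the closure of
`{ι(n) : n ∈ R}` in the arithmetic compactification `E₀(ℕ)` is uncountable;
consequently `E₀(ℕ)` is not metrizable. -/
theorem closure_of_evalChar_image_uncountable_and_not_metrizable :
    (∀ R : Set ℕ, R.Infinite → ¬ (closure (Anqie.evalChar '' R)).Countable) ∧
    ¬ TopologicalSpace.MetrizableSpace ↥Anqie.CharSpace := by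
  refine ⟨fun R hR => Anqie.not_countable_closure_evalChar_image hR, fun _ => ?_⟩
  have hrange : ¬ IsClosed (range Anqie.evalChar) := fun hclosed =>
    Anqie.not_countable_closure_evalChar_image infinite_univ
      (by rw [image_univ, hclosed.closure_eq]; exact countable_range _)
  obtain ⟨R, hR, hcount⟩ := exists_infinite_countable_closure_image_of_not_isClosed_range hrange
  exact Anqie.not_countable_closure_evalChar_image hR hcount
end

section
/- Let (X, d) be a compact metric space and f : ℕ → X a map with AE(f) = λ, where 0 ≤ λ < +∞. Then for every N ≥ 1 there exists a map f_N : ℕ → X whose range is a finite subset of f(ℕ), such that AE(f_N) ≤ λ and sup_{n ∈ ℕ} d(f_N(n), f(n)) ≤ 1/N. -/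
open Filter Set Topology

namespace AnqieAux
open Anqie

variable {X : Type*} [TopologicalSpace X]

/-- The orbit point `(f t, f (t+1), …)` as an element of `X_f`. -/
def orbPt (f : ℕ → X) (t : ℕ) : ↥(orbitClosure f) :=
  ⟨fun k => f (t + k), subset_closure ⟨t, fun _ => rfl⟩⟩

lemma shiftOn_iterate_coords (f : ℕ → X) (j : ℕ) (ω : ↥(orbitClosure f)) (k : ℕ) :
    (((shiftOn f)^[j] ω : ℕ → X)) k = (ω : ℕ → X) (k + j) := by
  induction j generalizing k with
  | zero => rfl
  | succ j ih =>
      rw [Function.iterate_succ_apply']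
      show (((shiftOn f)^[j] ω : ℕ → X)) (k + 1) = _
      rw [ih]
      have h : k + 1 + j = k + (j + 1) := by omega
      rw [h]

lemma shiftOn_iterate_orbPt (f : ℕ → X) (t j : ℕ) :
    (shiftOn f)^[j] (orbPt f t) = orbPt f (t + j) := by
  apply Subtype.ext
  funext k
  rw [shiftOn_iterate_coords]
  show f (t + (k + j)) = f (t + j + k)
  congr 1; omega

lemma continuous_shiftOn (f : ℕ → X) : Continuous (shiftOn f) := by
  apply Continuous.subtype_mk
  exact continuous_pi fun k => (continuous_apply (k + 1)).comp continuous_subtype_val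

lemma orbitClosure_coords_mem {f : ℕ → X} {S : Set X} (hS : IsClosed S)
    (hf : ∀ n, f n ∈ S) (ω : ↥(orbitClosure f)) (k : ℕ) : (ω : ℕ → X) k ∈ S := by
  have h1 : orbitClosure f ⊆ {z : ℕ → X | ∀ k, z k ∈ S} := by
    apply closure_minimal
    · rintro z ⟨n, hn⟩ k; rw [hn k]; exact hf _
    · have : {z : ℕ → X | ∀ k, z k ∈ S} = ⋂ k, (fun z : ℕ → X => z k) ⁻¹' S := by
        ext z; simp [Set.mem_iInter]
      rw [this]
      exact isClosed_iInter fun k => hS.preimage (continuous_apply k)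
  exact h1 ω.2 k

lemma compactSpace_orbitClosure [CompactSpace X] (f : ℕ → X) :
    CompactSpace ↥(orbitClosure f) :=
  isCompact_iff_compactSpace.mp isClosed_closure.isCompact

lemma nonempty_orbitClosure (f : ℕ → X) : Nonempty ↥(orbitClosure f) := ⟨orbPt f 0⟩

/-! ### coverNum and iterJoin basics -/

lemma coverNum_le_card {Z : Type*} {𝒱 : Set (Set Z)} {F : Finset (Set Z)}
    (h1 : (F : Set (Set Z)) ⊆ 𝒱) (h2 : ⋃₀ (F : Set (Set Z)) = Set.univ) :
    coverNum 𝒱 ≤ F.card :=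
  Nat.sInf_le ⟨F, h1, h2, rfl⟩

lemma exists_subcover_card_coverNum {Z : Type*} [TopologicalSpace Z] [CompactSpace Z]
    {𝒱 : Set (Set Z)} (ho : ∀ V ∈ 𝒱, IsOpen V) (hc : ⋃₀ 𝒱 = Set.univ) :
    ∃ F : Finset (Set Z), (F : Set (Set Z)) ⊆ 𝒱 ∧
      ⋃₀ (F : Set (Set Z)) = Set.univ ∧ F.card = coverNum 𝒱 := by
  have hcov : (Set.univ : Set Z) ⊆ ⋃ V ∈ 𝒱, V := by
    rw [← sUnion_eq_biUnion, hc]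
  obtain ⟨b', hb'sub, hb'fin, hb'cov⟩ :=
    IsCompact.elim_finite_subcover_image isCompact_univ ho hcov
  have hmem : (coverNum 𝒱) ∈ {k | ∃ F : Finset (Set Z), (F : Set (Set Z)) ⊆ 𝒱 ∧
      ⋃₀ (F : Set (Set Z)) = Set.univ ∧ F.card = k} := by
    apply Nat.sInf_mem
    refine ⟨hb'fin.toFinset.card, hb'fin.toFinset, ?_, ?_, rfl⟩
    · intro V hV
      simp only [Finset.mem_coe, Set.Finite.mem_toFinset] at hV
      exact hb'sub hV
    · apply Set.eq_univ_of_univ_subset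
      intro z hz
      have := hb'cov hz
      simp only [Set.mem_iUnion] at this
      obtain ⟨V, hV, hzV⟩ := this
      exact ⟨V, by simpa using hV, hzV⟩
  obtain ⟨F, hF1, hF2, hF3⟩ := hmem
  exact ⟨F, hF1, hF2, hF3⟩

lemma iterJoin_isOpen {Z : Type*} [TopologicalSpace Z] {T : Z → Z} (hT : Continuous T)
    {𝒰 : Set (Set Z)} (h : ∀ U ∈ 𝒰, IsOpen U) (n : ℕ) :
    ∀ V ∈ iterJoin T 𝒰 n, IsOpen V := by
  rintro V ⟨u, hu, rfl⟩
  exact isOpen_iInter_of_finite fun j => ((h _ (hu j)).preimage (hT.iterate _))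

lemma iterJoin_sUnion {Z : Type*} {T : Z → Z} {𝒰 : Set (Set Z)}
    (h : ⋃₀ 𝒰 = Set.univ) (n : ℕ) : ⋃₀ iterJoin T 𝒰 n = Set.univ := by
  apply Set.eq_univ_of_univ_subset
  intro z _
  have hch : ∀ j : Fin n, ∃ U ∈ 𝒰, T^[(j : ℕ)] z ∈ U := by
    intro j
    have : T^[(j : ℕ)] z ∈ ⋃₀ 𝒰 := by rw [h]; trivial
    exact this
  choose u hu hzu using hch
  exact ⟨⋂ j : Fin n, T^[(j : ℕ)] ⁻¹' u j, ⟨u, hu, rfl⟩, Set.mem_iInter.2 fun j => hzu j⟩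

lemma coverEntropy_le_entropy {Z : Type*} [TopologicalSpace Z] (T : Z → Z)
    {𝒰 : Set (Set Z)} (h : IsOpenCover 𝒰) : coverEntropy T 𝒰 ≤ entropy T :=
  le_iSup₂ (f := fun 𝒰 (_ : 𝒰 ∈ {𝒰 : Set (Set Z) | IsOpenCover 𝒰}) => coverEntropy T 𝒰) 𝒰 h

lemma EReal_le_of_forall_add {a : EReal} {b : ℝ}
    (h : ∀ δ : ℝ, 0 < δ → a ≤ ((b + δ : ℝ) : EReal)) : a ≤ (b : EReal) := by
  refine le_of_forall_gt_imp_ge_of_dense fun c hc => ?_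
  obtain ⟨r, hr1, hr2⟩ := EReal.lt_iff_exists_real_btwn.mp hc
  have hb : b < r := EReal.coe_lt_coe_iff.mp hr1
  have := h (r - b) (by linarith)
  calc a ≤ ((b + (r - b) : ℝ) : EReal) := this
    _ = (r : EReal) := by norm_num
    _ ≤ c := le_of_lt hr2

end AnqieAux

namespace AnqieAux
open Anqie

variable {X : Type*} [TopologicalSpace X] {ι : Type*}

/-- Cylinder set in `X_f`: zeroth coordinate lies in `U i`. -/
def cylE (f : ℕ → X) (U : ι → Set X) (i : ι) : Set ↥(orbitClosure f) :=
  {ω | (ω : ℕ → X) 0 ∈ U i}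

/-- The cylinder set of a word `w` of length `L`. -/
def Ew (f : ℕ → X) (U : ι → Set X) (w : ℕ → ι) (L : ℕ) : Set ↥(orbitClosure f) :=
  ⋂ k ∈ Finset.range L, (shiftOn f)^[k] ⁻¹' cylE f U (w k)

/-- `w` is trivial beyond position `L`. -/
def Norml (a₀ : ι) (L : ℕ) (w : ℕ → ι) : Prop := ∀ k, L ≤ k → w k = a₀

/-- The `i`-th `L`-block of `w`, normalized. -/
def chunk (a₀ : ι) (L : ℕ) (w : ℕ → ι) (i : ℕ) : ℕ → ι :=
  fun k => if k < L then w (i * L + k) else a₀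

/-- The word set `W` (length `L`) covers `X_f`. -/
def Covers (f : ℕ → X) (U : ι → Set X) (W : Finset (ℕ → ι)) (L : ℕ) : Prop :=
  ∀ ω : ↥(orbitClosure f), ∃ w ∈ W, ω ∈ Ew f U w L

lemma mem_Ew {f : ℕ → X} {U : ι → Set X} {w : ℕ → ι} {L : ℕ} {ω : ↥(orbitClosure f)} :
    ω ∈ Ew f U w L ↔ ∀ k < L, (shiftOn f)^[k] ω ∈ cylE f U (w k) := by
  simp [Ew]

lemma isOpen_cylE {f : ℕ → X} {U : ι → Set X} (hU : ∀ i, IsOpen (U i)) (i : ι) :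
    IsOpen (cylE f U i) :=
  ((hU i).preimage ((continuous_apply 0).comp continuous_subtype_val))

lemma isOpen_Ew {f : ℕ → X} {U : ι → Set X} (hU : ∀ i, IsOpen (U i)) (w : ℕ → ι) (L : ℕ) :
    IsOpen (Ew f U w L) :=
  isOpen_biInter_finset fun k _ =>
    (isOpen_cylE hU (w k)).preimage ((continuous_shiftOn f).iterate k)

lemma nat_block_div (L i k : ℕ) (hL : 0 < L) (hk : k < L) : (i * L + k) / L = i := by
  rw [mul_comm i L, Nat.mul_add_div hL, Nat.div_eq_of_lt hk, add_zero]

lemma nat_block_mod (L i k : ℕ) (hk : k < L) : (i * L + k) % L = k := by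
  rw [mul_comm i L, Nat.mul_add_mod, Nat.mod_eq_of_lt hk]

lemma Ew_chunk_subset {f : ℕ → X} {U : ι → Set X} (a₀ : ι) {w : ℕ → ι} {L q i : ℕ}
    (hi : i < q) :
    Ew f U w (q * L) ⊆ (shiftOn f)^[i * L] ⁻¹' Ew f U (chunk a₀ L w i) L := by
  intro ω hω
  rw [mem_Ew] at hω
  rw [Set.mem_preimage, mem_Ew]
  intro k hk
  have h1 : k + i * L < q * L := by
    have h2 : (i + 1) * L ≤ q * L := Nat.mul_le_mul_right L hi
    have h3 : k + i * L < (i + 1) * L := by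
      rw [add_mul, one_mul]; omega
    omega
  have := hω (k + i * L) h1
  rw [Function.iterate_add_apply] at this
  show (shiftOn f)^[k] ((shiftOn f)^[i*L] ω) ∈ cylE f U (chunk a₀ L w i k)
  have hch : chunk a₀ L w i k = w (i * L + k) := if_pos hk
  rw [hch]
  convert this using 3
  omega

lemma step_ex [CompactSpace X] (f : ℕ → X) (U : ι → Set X) (hU : ∀ i, IsOpen (U i)) (a₀ : ι)
    (lam : ℝ) (hlam : 0 ≤ lam) (hent : entropy (shiftOn f) ≤ (lam : EReal))
    (W : Finset (ℕ → ι)) (L : ℕ) (hL : 0 < L)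
    (hnorm : ∀ w ∈ W, Norml a₀ L w) (hcov : Covers f U W L)
    (δ : ℝ) (hδ : 0 < δ) :
    ∃ q : ℕ, 0 < q ∧ ∃ W' : Finset (ℕ → ι),
      (∀ w ∈ W', Norml a₀ (q * L) w) ∧
      (∀ w ∈ W', ∀ i < q, chunk a₀ L w i ∈ W) ∧
      Covers f U W' (q * L) ∧
      ((W'.card : ℝ) ≤ Real.exp ((lam + δ) * (q * L))) := by
  classical
  haveI := compactSpace_orbitClosure f
  set T := shiftOn f with hT
  set 𝒱 : Set (Set ↥(orbitClosure f)) := (fun w => Ew f U w L) '' ↑W with h𝒱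
  have h𝒱open : ∀ V ∈ 𝒱, IsOpen V := by
    rintro V ⟨w, _, rfl⟩; exact isOpen_Ew hU w L
  have h𝒱cov : ⋃₀ 𝒱 = Set.univ := by
    apply Set.eq_univ_of_univ_subset
    intro ω _
    obtain ⟨w, hwW, hw⟩ := hcov ω
    exact ⟨Ew f U w L, ⟨w, hwW, rfl⟩, hw⟩
  have hce : coverEntropy T 𝒱 ≤ (lam : EReal) :=
    (coverEntropy_le_entropy T ⟨h𝒱open, h𝒱cov⟩).trans hent
  have hlt : coverEntropy T 𝒱 < ((lam + δ : ℝ) : EReal) :=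
    lt_of_le_of_lt hce (EReal.coe_lt_coe_iff.2 (by linarith))
  have hev := eventually_lt_of_limsup_lt hlt
  obtain ⟨n₀, hn₀⟩ := eventually_atTop.mp hev
  refine ⟨n₀ + 1, Nat.succ_pos _, ?_⟩
  set q := n₀ + 1 with hq
  set n := n₀ * L + 1 with hn
  have hnn₀ : n₀ ≤ n := by
    have : n₀ * 1 ≤ n₀ * L := Nat.mul_le_mul_left _ hL
    omega
  have hnqL : n ≤ q * L := by
    have : q * L = n₀ * L + L := by rw [hq]; ring
    omega
  have hnpos : 0 < n := by omega
  have hKn := hn₀ n hnn₀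
  set K := coverNum (iterJoin T 𝒱 n) with hK
  have hKreal : Real.log (K : ℝ) / (n : ℝ) < lam + δ := by
    exact_mod_cast hKn
  have hKexp : (K : ℝ) ≤ Real.exp ((lam + δ) * (q * L)) := by
    have hlog : Real.log (K : ℝ) < (lam + δ) * n := by
      rw [div_lt_iff₀ (by positivity)] at hKreal
      linarith [hKreal]
    have h2 : ((lam + δ) * n : ℝ) ≤ (lam + δ) * (q * L) := by
      apply mul_le_mul_of_nonneg_left _ (by linarith)
      exact_mod_cast hnqL
    rcases Nat.eq_zero_or_pos K with h | h
    · simp only [h, Nat.cast_zero]; positivity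
    · have : (K : ℝ) = Real.exp (Real.log (K : ℝ)) := by
        rw [Real.exp_log]; exact_mod_cast h
      rw [this]
      exact Real.exp_le_exp.2 (by linarith)
  obtain ⟨F, hFsub, hFcov, hFcard⟩ := exists_subcover_card_coverNum
    (iterJoin_isOpen (continuous_shiftOn f) h𝒱open n) (iterJoin_sUnion h𝒱cov n)
  have hsel : ∀ V ∈ F, ∃ w : ℕ → ι, Norml a₀ (q * L) w ∧
      (∀ i < q, chunk a₀ L w i ∈ W) ∧ V ⊆ Ew f U w (q * L) := by
    intro V hV
    obtain ⟨u, hu, rfl⟩ := hFsub hV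
    have hch : ∀ j : Fin n, ∃ w, w ∈ W ∧ Ew f U w L = u j := by
      intro j
      obtain ⟨w, hwW, he⟩ := hu j
      exact ⟨w, hwW, he⟩
    choose wf hwfW hwfE using hch
    have hiLn : ∀ i, i < q → i * L < n := by
      intro i hi
      have : i * L ≤ n₀ * L := Nat.mul_le_mul_right L (by omega)
      omega
    set wAt : ℕ → (ℕ → ι) := fun i => if h : i * L < n then wf ⟨i * L, h⟩ else (fun _ => a₀)
      with hwAt
    have hwAtpos : ∀ i (h : i * L < n), wAt i = wf ⟨i * L, h⟩ := by
      intro i h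
      simp only [hwAt, dif_pos h]
    refine ⟨fun t => if t < q * L then wAt (t / L) (t % L) else a₀, ?_, ?_, ?_⟩
    · intro k hk
      simp only [if_neg (by omega : ¬ k < q * L)]
    · -- chunks belong to W
      intro i hi
      have hiL := hiLn i hi
      have heq : chunk a₀ L (fun t => if t < q * L then wAt (t / L) (t % L) else a₀) i
          = wf ⟨i * L, hiL⟩ := by
        funext k
        by_cases hk : k < L
        · have h1 : i * L + k < q * L := by
            have h2 : (i + 1) * L ≤ q * L := Nat.mul_le_mul_right L hi
            have h3 : i * L + k < (i + 1) * L := by rw [add_mul, one_mul]; omega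
            omega
          simp only [chunk, if_pos hk, if_pos h1]
          rw [nat_block_div L i k hL hk, nat_block_mod L i k hk, hwAtpos i hiL]
        · simp only [chunk, if_neg hk]
          exact (hnorm _ (hwfW ⟨i * L, hiL⟩) k (by omega)).symm
      rw [heq]
      exact hwfW _
    · -- containment
      intro x hx
      rw [mem_Ew]
      intro t ht
      have htL : t / L < q := by
        rw [Nat.div_lt_iff_lt_mul hL]; exact ht
      have htLn : t / L * L < n := hiLn (t / L) htL
      have hx1 : x ∈ T^[((⟨t / L * L, htLn⟩ : Fin n) : ℕ)] ⁻¹' u ⟨t / L * L, htLn⟩ :=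
        Set.mem_iInter.1 hx ⟨t / L * L, htLn⟩
      rw [← hwfE ⟨t / L * L, htLn⟩] at hx1
      have hx2 : T^[t / L * L] x ∈ Ew f U (wf ⟨t / L * L, htLn⟩) L := hx1
      rw [mem_Ew] at hx2
      have hx3 := hx2 (t % L) (Nat.mod_lt t hL)
      rw [← Function.iterate_add_apply] at hx3
      have harith : t % L + t / L * L = t := Nat.mod_add_div' t L
      rw [harith] at hx3
      have : (if t < q * L then wAt (t / L) (t % L) else a₀)
          = wf ⟨t / L * L, htLn⟩ (t % L) := by
        simp only [if_pos ht]
        rw [hwAtpos (t / L) htLn]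
      rw [this]
      exact hx3
  set W' : Finset (ℕ → ι) := F.attach.image (fun V => (hsel V.1 V.2).choose) with hW'
  refine ⟨W', ?_, ?_, ?_, ?_⟩
  · intro w hw
    obtain ⟨V, _, rfl⟩ := Finset.mem_image.1 hw
    exact (hsel V.1 V.2).choose_spec.1
  · intro w hw
    obtain ⟨V, _, rfl⟩ := Finset.mem_image.1 hw
    exact (hsel V.1 V.2).choose_spec.2.1
  · intro ω
    have : ω ∈ ⋃₀ (F : Set (Set ↥(orbitClosure f))) := by rw [hFcov]; trivial
    obtain ⟨V, hVF, hωV⟩ := this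
    have hVF' : V ∈ F := hVF
    refine ⟨(hsel V hVF').choose, ?_, (hsel V hVF').choose_spec.2.2 hωV⟩
    exact Finset.mem_image.2 ⟨⟨V, hVF'⟩, Finset.mem_attach _ _, rfl⟩
  · calc (W'.card : ℝ) ≤ (F.attach.card : ℝ) := by
          exact_mod_cast Finset.card_image_le
    _ = (F.card : ℝ) := by rw [Finset.card_attach]
    _ = (K : ℝ) := by rw [hFcard]
    _ ≤ _ := hKexp

end AnqieAux

namespace AnqieAux
open Anqie

variable {X : Type*} [TopologicalSpace X] {ι : Type*}

structure Level (f : ℕ → X) (U : ι → Set X) (a₀ : ι) where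
  L : ℕ
  W : Finset (ℕ → ι)
  pos : 0 < L
  norm : ∀ w ∈ W, Norml a₀ L w
  cov : Covers f U W L

def Rel (f : ℕ → X) (U : ι → Set X) (a₀ : ι) (lam : ℝ) (s : ℕ)
    (p p' : Level f U a₀) : Prop :=
  ∃ q : ℕ, 0 < q ∧ p'.L = q * p.L ∧
    (∀ w ∈ p'.W, ∀ i < q, chunk a₀ p.L w i ∈ p.W) ∧
    ((p'.W.card : ℝ) ≤ Real.exp ((lam + 1 / ((s : ℝ) + 1)) * (p'.L : ℝ)))

lemma exists_rel [CompactSpace X] (f : ℕ → X) (U : ι → Set X)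
    (hU : ∀ i, IsOpen (U i)) (a₀ : ι) (lam : ℝ) (hlam : 0 ≤ lam)
    (hent : entropy (shiftOn f) ≤ (lam : EReal)) :
    ∀ s (p : Level f U a₀), ∃ p', Rel f U a₀ lam s p p' := by
  intro s p
  obtain ⟨q, hq, W', h1, h2, h3, h4⟩ := step_ex f U hU a₀ lam hlam hent p.W p.L p.pos
    p.norm p.cov (1 / ((s : ℝ) + 1)) (by positivity)
  refine ⟨⟨q * p.L, W', Nat.mul_pos hq p.pos, h1, h3⟩, q, hq, rfl, h2, ?_⟩
  convert h4 using 2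
  push_cast
  ring

noncomputable def levTower (f : ℕ → X) (U : ι → Set X) (a₀ : ι) (lam : ℝ)
    (base : Level f U a₀)
    (hstep : ∀ s (p : Level f U a₀), ∃ p', Rel f U a₀ lam s p p') : ℕ → Level f U a₀
  | 0 => base
  | s + 1 => (hstep s (levTower f U a₀ lam base hstep s)).choose

lemma levTower_rel (f : ℕ → X) (U : ι → Set X) (a₀ : ι) (lam : ℝ)
    (base : Level f U a₀)
    (hstep : ∀ s (p : Level f U a₀), ∃ p', Rel f U a₀ lam s p p') (s : ℕ) :
    Rel f U a₀ lam s (levTower f U a₀ lam base hstep s)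
      (levTower f U a₀ lam base hstep (s + 1)) :=
  (hstep s _).choose_spec

/-- The set of sequences compatible with `f` and aligned with the word set `W`. -/
def Aset (f : ℕ → X) (U : ι → Set X) (c : ι → X) (W : Finset (ℕ → ι)) (L : ℕ) :
    Set (ℕ → X) :=
  {x | ∀ i : ℕ, ∃ w ∈ W, orbPt f (i * L) ∈ Ew f U w L ∧ ∀ k < L, x (i * L + k) = c (w k)}

lemma isClosed_Aset [T2Space X] (f : ℕ → X) (U : ι → Set X) (c : ι → X)
    (W : Finset (ℕ → ι)) (L : ℕ) : IsClosed (Aset f U c W L) := by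
  classical
  have heq : Aset f U c W L = ⋂ i : ℕ,
      ⋃ w ∈ W.filter (fun w => orbPt f (i * L) ∈ Ew f U w L),
        ⋂ k : ℕ, ⋂ (_ : k < L), {x : ℕ → X | x (i * L + k) = c (w k)} := by
    ext x
    simp only [Aset, Set.mem_setOf_eq, Set.mem_iInter, Set.mem_iUnion,
      Finset.mem_filter, Set.mem_setOf_eq]
    constructor
    · intro hx i
      obtain ⟨w, h1, h2, h3⟩ := hx i
      exact ⟨w, ⟨h1, h2⟩, fun k hk => h3 k hk⟩
    · intro hx i
      obtain ⟨w, ⟨h1, h2⟩, h3⟩ := hx i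
      exact ⟨w, h1, h2, fun k hk => h3 k hk⟩
  rw [heq]
  refine isClosed_iInter fun i => ?_
  refine Set.Finite.isClosed_biUnion (Finset.finite_toSet _) fun w _ => ?_
  refine isClosed_iInter fun k => isClosed_iInter fun _ => ?_
  exact isClosed_eq (continuous_apply _) continuous_const

lemma Aset_nonempty (f : ℕ → X) (U : ι → Set X) (c : ι → X) (W : Finset (ℕ → ι))
    (L : ℕ) (hL : 0 < L) (hcov : Covers f U W L) : (Aset f U c W L).Nonempty := by
  have hcovP : ∀ i : ℕ, ∃ w, w ∈ W ∧ orbPt f (i * L) ∈ Ew f U w L := by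
    intro i
    obtain ⟨w, h1, h2⟩ := hcov (orbPt f (i * L))
    exact ⟨w, h1, h2⟩
  choose g hgW hgE using hcovP
  refine ⟨fun t => c (g (t / L) (t % L)), fun i => ⟨g i, hgW i, hgE i, ?_⟩⟩
  intro k hk
  simp only
  rw [nat_block_div L i k hL hk, nat_block_mod L i k hk]

lemma Aset_antitone (f : ℕ → X) (U : ι → Set X) (c : ι → X) (a₀ : ι)
    {W W' : Finset (ℕ → ι)} {L q : ℕ} (hL : 0 < L) (hq : 0 < q)
    (hchunk : ∀ w ∈ W', ∀ i < q, chunk a₀ L w i ∈ W) :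
    Aset f U c W' (q * L) ⊆ Aset f U c W L := by
  intro x hx i
  obtain ⟨w, hwW', hfit, hxw⟩ := hx (i / q)
  have hiq := Nat.mod_lt i hq
  have key0 : i * L = i / q * (q * L) + i % q * L := by
    conv_lhs => rw [← Nat.div_add_mod i q]
    ring
  refine ⟨chunk a₀ L w (i % q), hchunk w hwW' _ hiq, ?_, ?_⟩
  · have h1 := Ew_chunk_subset a₀ (f := f) (U := U) (w := w) (L := L) (q := q) hiq hfit
    rw [Set.mem_preimage, shiftOn_iterate_orbPt] at h1
    rw [key0]
    exact h1
  · intro k hk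
    have hik : i % q * L + k < q * L := by
      have h2 : (i % q + 1) * L ≤ q * L := Nat.mul_le_mul_right L hiq
      have h3 : i % q * L + k < (i % q + 1) * L := by rw [add_mul, one_mul]; omega
      omega
    have := hxw (i % q * L + k) hik
    have key : i * L + k = i / q * (q * L) + (i % q * L + k) := by omega
    rw [key, this]
    congr 1
    exact (if_pos hk).symm

/-- Main construction: the finite-valued sequence `x` aligned at all levels. -/
lemma exists_x [CompactSpace X] [T2Space X] [Fintype ι] (f : ℕ → X) (U : ι → Set X)
    (hU : ∀ i, IsOpen (U i)) (a₀ : ι) (c : ι → X) (lam : ℝ) (hlam : 0 ≤ lam)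
    (hent : entropy (shiftOn f) ≤ (lam : EReal))
    (hUcov : ∀ ω : ↥(orbitClosure f), ∃ i, (ω : ℕ → X) 0 ∈ U i) :
    ∃ x : ℕ → X,
      (∀ t, ∃ a : ι, x t = c a ∧ f t ∈ U a) ∧
      (∀ s : ℕ, ∃ (L : ℕ) (W : Finset (ℕ → ι)), 0 < L ∧
        ((W.card : ℝ) ≤ Real.exp ((lam + 1 / ((s : ℝ) + 1)) * (L : ℝ))) ∧
        (∀ i : ℕ, ∃ w ∈ W, ∀ k < L, x (i * L + k) = c (w k))) := by
  classical
  -- base level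
  set W₀ : Finset (ℕ → ι) :=
    Finset.univ.image (fun i : ι => fun k => if k = 0 then i else a₀) with hW₀
  have hnorm₀ : ∀ w ∈ W₀, Norml a₀ 1 w := by
    intro w hw
    obtain ⟨i, _, rfl⟩ := Finset.mem_image.1 hw
    intro k hk
    exact if_neg (by omega)
  have hcov₀ : Covers f U W₀ 1 := by
    intro ω
    obtain ⟨i, hi⟩ := hUcov ω
    refine ⟨fun k => if k = 0 then i else a₀,
      Finset.mem_image.2 ⟨i, Finset.mem_univ _, rfl⟩, ?_⟩
    rw [mem_Ew]
    intro k hk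
    have hk0 : k = 0 := by omega
    subst hk0
    simpa [cylE] using hi
  let base : Level f U a₀ := ⟨1, W₀, one_pos, hnorm₀, hcov₀⟩
  have hstep := exists_rel f U hU a₀ lam hlam hent
  set levs := levTower f U a₀ lam base hstep with hlevs
  have hbaseL : (levs 0).L = 1 := rfl
  set A : ℕ → Set (ℕ → X) := fun s => Aset f U c (levs s).W (levs s).L with hA
  have hdec : ∀ s, A (s + 1) ⊆ A s := by
    intro s
    obtain ⟨q, hq, hLeq, hchunk, _⟩ := levTower_rel f U a₀ lam base hstep s
    have : A (s + 1) = Aset f U c (levs (s + 1)).W (q * (levs s).L) := by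
      rw [hA]; simp only; rw [← hLeq]
    rw [this]
    exact Aset_antitone f U c a₀ (levs s).pos hq hchunk
  have hne : ∀ s, (A s).Nonempty := fun s =>
    Aset_nonempty f U c _ _ (levs s).pos (levs s).cov
  have hcl : ∀ s, IsClosed (A s) := fun s => isClosed_Aset f U c _ _
  have hx : (⋂ s, A s).Nonempty := by
    apply IsCompact.nonempty_iInter_of_sequence_nonempty_isCompact_isClosed A hdec hne
    · exact (hcl 0).isCompact
    · exact hcl
  obtain ⟨x, hxA⟩ := hx
  have hxs : ∀ s, x ∈ A s := fun s => Set.mem_iInter.1 hxA s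
  refine ⟨x, ?_, ?_⟩
  · -- validity from level 0
    intro t
    obtain ⟨w, hwW, hfit, hval⟩ := hxs 0 t
    refine ⟨w 0, ?_, ?_⟩
    · have := hval 0 (hbaseL ▸ one_pos)
      rw [hbaseL] at this
      simpa using this
    · rw [mem_Ew] at hfit
      have := hfit 0 (hbaseL ▸ one_pos)
      rw [Function.iterate_zero_apply] at this
      have h2 : (orbPt f (t * (levs 0).L) : ℕ → X) 0 ∈ U (w 0) := this
      have h3 : (orbPt f (t * (levs 0).L) : ℕ → X) 0 = f t := by
        show f (t * (levs 0).L + 0) = f t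
        congr 1
        rw [hbaseL]; omega
      rwa [h3] at h2
  · -- alignment with card bounds, level s+1
    intro s
    obtain ⟨q, hq, hLeq, hchunk, hcard⟩ := levTower_rel f U a₀ lam base hstep s
    refine ⟨(levs (s + 1)).L, (levs (s + 1)).W, (levs (s + 1)).pos, hcard, ?_⟩
    intro i
    obtain ⟨w, hwW, _, hval⟩ := hxs (s + 1) i
    exact ⟨w, hwW, hval⟩

end AnqieAux

namespace AnqieAux
open Anqie

variable {X : Type*} [TopologicalSpace X]

lemma coords_mem_range [T1Space X] (x : ℕ → X) (hfin : (Set.range x).Finite)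
    (ω : ↥(orbitClosure x)) (k : ℕ) : (ω : ℕ → X) k ∈ Set.range x :=
  orbitClosure_coords_mem hfin.isClosed (fun n => ⟨n, rfl⟩) ω k

lemma isOpen_prefixCyl [T1Space X] (x : ℕ → X) (hfin : (Set.range x).Finite)
    (v : ℕ → X) (L : ℕ) :
    IsOpen {ω : ↥(orbitClosure x) | ∀ k < L, (ω : ℕ → X) k = v k} := by
  have hco : ∀ k : ℕ, IsOpen ((Set.range x \ {v k})ᶜ) := fun k =>
    (hfin.subset Set.diff_subset).isClosed.isOpen_compl
  have heq : {ω : ↥(orbitClosure x) | ∀ k < L, (ω : ℕ → X) k = v k}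
      = ⋂ k ∈ Finset.range L,
        (fun ω : ↥(orbitClosure x) => (ω : ℕ → X) k) ⁻¹' ((Set.range x \ {v k})ᶜ) := by
    ext ω
    simp only [Set.mem_setOf_eq, Set.mem_iInter, Finset.mem_range, Set.mem_preimage,
      Set.mem_compl_iff, Set.mem_diff, Set.mem_singleton_iff]
    constructor
    · intro h k hk hc
      exact hc.2 (h k hk)
    · intro h k hk
      by_contra hne
      exact h k hk ⟨coords_mem_range x hfin ω k, hne⟩
  rw [heq]
  exact isOpen_biInter_finset fun k _ =>
    (hco k).preimage ((continuous_apply k).comp continuous_subtype_val)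

lemma exists_lebesgue [T1Space X] [CompactSpace X] (x : ℕ → X)
    (hfin : (Set.range x).Finite) {𝒲 : Set (Set ↥(orbitClosure x))}
    (h𝒲 : IsOpenCover 𝒲) :
    ∃ Lb : ℕ, 0 < Lb ∧ ∀ ω : ↥(orbitClosure x), ∃ V ∈ 𝒲,
      ∀ ω' : ↥(orbitClosure x), (∀ k < Lb, (ω' : ℕ → X) k = (ω : ℕ → X) k) → ω' ∈ V := by
  haveI := compactSpace_orbitClosure x
  have hpt : ∀ ω : ↥(orbitClosure x), ∃ (V : Set ↥(orbitClosure x)) (L : ℕ), V ∈ 𝒲 ∧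
      ∀ ω' : ↥(orbitClosure x), (∀ k < L, (ω' : ℕ → X) k = (ω : ℕ → X) k) → ω' ∈ V := by
    intro ω
    have hω : ω ∈ ⋃₀ 𝒲 := by rw [h𝒲.2]; trivial
    obtain ⟨V, hV𝒲, hωV⟩ := hω
    obtain ⟨V', hV'open, hV'pre⟩ := isOpen_induced_iff.1 (h𝒲.1 V hV𝒲)
    have hωV' : (ω : ℕ → X) ∈ V' := by
      rw [← hV'pre] at hωV
      exact hωV
    obtain ⟨I, u, hu, hIpi⟩ := (isOpen_pi_iff.1 hV'open) (ω : ℕ → X) hωV'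
    refine ⟨V, (I.sup id) + 1, hV𝒲, ?_⟩
    intro ω' hω'
    have hmem : (ω' : ℕ → X) ∈ (I : Set ℕ).pi u := by
      intro b hb
      have hbI : b ∈ I := hb
      have hblt : b < I.sup id + 1 := Nat.lt_succ_of_le (Finset.le_sup (f := id) hbI)
      rw [hω' b hblt]
      exact (hu b hbI).2
    have := hIpi hmem
    rw [← hV'pre]
    exact this
  choose Vof Lof hV𝒲 hVsub using hpt
  have hcov : (Set.univ : Set ↥(orbitClosure x)) ⊆
      ⋃ ω : ↥(orbitClosure x),
        {ω' : ↥(orbitClosure x) | ∀ k < Lof ω, (ω' : ℕ → X) k = (ω : ℕ → X) k} :=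
    fun ω _ => Set.mem_iUnion.2 ⟨ω, fun k _ => rfl⟩
  obtain ⟨t, ht⟩ := isCompact_univ.elim_finite_subcover _
    (fun ω => isOpen_prefixCyl x hfin _ _) hcov
  refine ⟨(t.sup Lof) + 1, Nat.succ_pos _, ?_⟩
  intro ω
  have hωc : ω ∈ ⋃ ω₀ ∈ t,
      {ω' : ↥(orbitClosure x) | ∀ k < Lof ω₀, (ω' : ℕ → X) k = (ω₀ : ℕ → X) k} :=
    ht (Set.mem_univ ω)
  obtain ⟨ω₀, hω₀t, hωc⟩ := Set.mem_iUnion₂.1 hωc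
  refine ⟨Vof ω₀, hV𝒲 ω₀, ?_⟩
  intro ω' hω'
  apply hVsub ω₀
  intro k hk
  have hk' : k < t.sup Lof + 1 := by
    have := Finset.le_sup (f := Lof) hω₀t
    omega
  rw [hω' k hk']
  exact hωc k hk

lemma prefix_is_window [T1Space X] (x : ℕ → X) (hfin : (Set.range x).Finite)
    (ω : ↥(orbitClosure x)) (n' : ℕ) : ∃ t : ℕ, ∀ k < n', (ω : ℕ → X) k = x (t + k) := by
  set O : Set (ℕ → X) := ⋂ k ∈ Finset.range n',
    (fun z : ℕ → X => z k) ⁻¹' ((Set.range x \ {(ω : ℕ → X) k})ᶜ) with hO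
  have hOopen : IsOpen O := isOpen_biInter_finset fun k _ =>
    ((hfin.subset Set.diff_subset).isClosed.isOpen_compl).preimage (continuous_apply k)
  have hωO : (ω : ℕ → X) ∈ O := by
    rw [hO]
    refine Set.mem_iInter₂.2 fun k _ => ?_
    intro hc
    exact hc.2 rfl
  have hωcl : (ω : ℕ → X) ∈ closure (orbitSet x) := ω.2
  rw [mem_closure_iff] at hωcl
  obtain ⟨z, hzO, hz⟩ := hωcl O hOopen hωO
  obtain ⟨t, htz⟩ := hz
  refine ⟨t, fun k hk => ?_⟩
  have hzk : z k ∉ Set.range x \ {(ω : ℕ → X) k} := by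
    have := Set.mem_iInter.1 hzO k
    simp only [Set.mem_iInter, Finset.mem_range, Set.mem_preimage, Set.mem_compl_iff] at this
    exact this hk
  have hzr : z k ∈ Set.range x := by rw [htz k]; exact ⟨t + k, rfl⟩
  have : z k = (ω : ℕ → X) k := by
    by_contra hne
    exact hzk ⟨hzr, hne⟩
  rw [← this, htz k]

end AnqieAux

namespace AnqieAux
open Anqie

variable {X : Type*} [TopologicalSpace X] {ι : Type*}

/-- Cover element of the `n`-fold join determined by a selector and a prospective prefix. -/
def Hset (x : ℕ → X) (Wsel : (ℕ → X) → Set ↥(orbitClosure x)) (n : ℕ) (v : ℕ → X) :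
    Set ↥(orbitClosure x) :=
  ⋂ j : Fin n, (shiftOn x)^[(j : ℕ)] ⁻¹' (Wsel (fun k => v ((j : ℕ) + k)))

/-- The prospective prefix built from an offset and a tuple of block words. -/
def PhiMap (x : ℕ → X) (c : ι → X) (L r : ℕ) (p : Fin L × (Fin r → (ℕ → ι))) : ℕ → X :=
  fun k => if h : ((p.1 : ℕ) + k) / L < r
    then c (p.2 ⟨((p.1 : ℕ) + k) / L, h⟩ (((p.1 : ℕ) + k) % L)) else x 0

lemma coverNum_window_bound [T1Space X] [CompactSpace X] [Fintype ι]
    (x : ℕ → X) (c : ι → X) (hxr : ∀ t, ∃ a : ι, x t = c a)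
    {W : Finset (ℕ → ι)} {L : ℕ} (hL : 0 < L)
    (halign : ∀ i : ℕ, ∃ w ∈ W, ∀ k < L, x (i * L + k) = c (w k))
    {𝒲 : Set (Set ↥(orbitClosure x))} (h𝒲 : IsOpenCover 𝒲)
    {Lb : ℕ}
    (hleb : ∀ ω : ↥(orbitClosure x), ∃ V ∈ 𝒲, ∀ ω' : ↥(orbitClosure x),
      (∀ k < Lb, (ω' : ℕ → X) k = (ω : ℕ → X) k) → ω' ∈ V)
    (n : ℕ) :
    coverNum (iterJoin (shiftOn x) 𝒲 n) ≤ L * W.card ^ ((n + Lb) / L + 2) := by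
  classical
  haveI := compactSpace_orbitClosure x
  choose Vof hV𝒲 hVsub using hleb
  set n' := n + Lb with hn'
  set r := n' / L + 2 with hr
  have hfin : (Set.range x).Finite := by
    have hsub : Set.range x ⊆ Set.range c := by
      rintro _ ⟨t, rfl⟩
      obtain ⟨a, ha⟩ := hxr t
      exact ⟨a, ha.symm⟩
    exact (Set.finite_range c).subset hsub
  -- total selector
  have hWselEx : ∀ v : ℕ → X, ∃ V ∈ 𝒲, ∀ ω' : ↥(orbitClosure x),
      (∀ k < Lb, (ω' : ℕ → X) k = v k) → ω' ∈ V := by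
    intro v
    by_cases h : ∃ ω : ↥(orbitClosure x), ∀ k < Lb, (ω : ℕ → X) k = v k
    · obtain ⟨ω₁, hω₁⟩ := h
      refine ⟨Vof ω₁, hV𝒲 ω₁, fun ω' hω' => ?_⟩
      exact hVsub ω₁ ω' (fun k hk => by rw [hω' k hk, ← hω₁ k hk])
    · have hne : ∃ V, V ∈ 𝒲 := by
        have hmem : (orbPt x 0) ∈ ⋃₀ 𝒲 := by rw [h𝒲.2]; trivial
        obtain ⟨V, hV, _⟩ := hmem
        exact ⟨V, hV⟩
      obtain ⟨V, hV⟩ := hne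
      exact ⟨V, hV, fun ω' hω' => absurd ⟨ω', hω'⟩ h⟩
  choose Wsel hWsel𝒲 hWselsub using hWselEx
  have hHJ : ∀ v : ℕ → X, Hset x Wsel n v ∈ iterJoin (shiftOn x) 𝒲 n := fun v =>
    ⟨fun j => Wsel (fun k => v ((j : ℕ) + k)), fun j => hWsel𝒲 _, rfl⟩
  choose gw hgW hgw using halign
  set G : Finset (Set ↥(orbitClosure x)) :=
    Finset.image (fun d : Fin L × (Fin r → {w // w ∈ W}) =>
      Hset x Wsel n (PhiMap x c L r (d.1, fun j => (d.2 j : ℕ → ι)))) Finset.univ with hG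
  have hGsub : (G : Set (Set ↥(orbitClosure x))) ⊆ iterJoin (shiftOn x) 𝒲 n := by
    intro V hV
    obtain ⟨d, _, rfl⟩ := Finset.mem_image.1 hV
    exact hHJ _
  have hGcov : ⋃₀ (G : Set (Set ↥(orbitClosure x))) = Set.univ := by
    apply Set.eq_univ_of_univ_subset
    intro ω _
    obtain ⟨t, hts⟩ := prefix_is_window x hfin ω n'
    have ho : t % L < L := Nat.mod_lt t hL
    have hrL : n' + L ≤ r * L := by
      have e1 : n' / L * L + n' % L = n' := Nat.div_add_mod' n' L
      have e2 : n' % L < L := Nat.mod_lt n' hL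
      have e3 : r * L = n' / L * L + 2 * L := by rw [hr]; ring
      omega
    have hdiv : ∀ k < n', (t % L + k) / L < r := by
      intro k hk
      rw [Nat.div_lt_iff_lt_mul hL]
      omega
    set d : Fin L × (Fin r → {w // w ∈ W}) :=
      (⟨t % L, ho⟩, fun j => ⟨gw (t / L + (j : ℕ)), hgW _⟩) with hd
    set v : ℕ → X := PhiMap x c L r (d.1, fun j => (d.2 j : ℕ → ι)) with hv
    -- key computation
    have hkey : ∀ k < n', v k = x (t + k) := by
      intro k hk
      have hdk := hdiv k hk
      have hveq : v k = c (gw (t / L + (t % L + k) / L) ((t % L + k) % L)) := by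
        rw [hv, PhiMap]
        simp only
        rw [dif_pos hdk]
      rw [hveq]
      have e1 : t / L * L + t % L = t := Nat.div_add_mod' t L
      have e2 : (t % L + k) / L * L + (t % L + k) % L = t % L + k :=
        Nat.div_add_mod' (t % L + k) L
      have e3 : (t / L + (t % L + k) / L) * L = t / L * L + (t % L + k) / L * L := by ring
      have e4 : (t / L + (t % L + k) / L) * L + (t % L + k) % L = t + k := by omega
      have := hgw (t / L + (t % L + k) / L) ((t % L + k) % L) (Nat.mod_lt _ hL)
      rw [e4] at this
      exact this.symm
    -- ω has prefix v
    have hpre : ∀ k < n', (ω : ℕ → X) k = v k := by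
      intro k hk
      rw [hts k hk, hkey k hk]
    -- ω belongs to the H-set
    have hωH : ω ∈ Hset x Wsel n v := by
      rw [Hset]
      refine Set.mem_iInter.2 fun j => ?_
      rw [Set.mem_preimage]
      apply hWselsub
      intro k hk
      rw [shiftOn_iterate_coords]
      have hkj : k + (j : ℕ) < n' := by
        have := j.2
        omega
      rw [hpre (k + (j : ℕ)) hkj]
      congr 1
      omega
    exact ⟨Hset x Wsel n v, Finset.mem_image.2 ⟨d, Finset.mem_univ _, rfl⟩, hωH⟩
  have hcn : coverNum (iterJoin (shiftOn x) 𝒲 n) ≤ G.card := coverNum_le_card hGsub hGcov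
  have hcard : G.card ≤ L * W.card ^ r := by
    calc G.card ≤ Finset.univ.card (α := Fin L × (Fin r → {w // w ∈ W})) :=
          Finset.card_image_le
    _ = Fintype.card (Fin L × (Fin r → {w // w ∈ W})) := Finset.card_univ
    _ = L * W.card ^ r := by
        rw [Fintype.card_prod, Fintype.card_fun, Fintype.card_fin, Fintype.card_coe,
          Fintype.card_fin]
  omega

lemma entropy_le_of_alignments [CompactSpace X] [T2Space X] [Fintype ι]
    (x : ℕ → X) (c : ι → X) (hxr : ∀ t, ∃ a : ι, x t = c a) (lam : ℝ) (hlam : 0 ≤ lam)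
    (halignAll : ∀ s : ℕ, ∃ (L : ℕ) (W : Finset (ℕ → ι)), 0 < L ∧
      ((W.card : ℝ) ≤ Real.exp ((lam + 1 / ((s : ℝ) + 1)) * (L : ℝ))) ∧
      (∀ i : ℕ, ∃ w ∈ W, ∀ k < L, x (i * L + k) = c (w k))) :
    entropy (shiftOn x) ≤ (lam : EReal) := by
  haveI := compactSpace_orbitClosure x
  have hfin : (Set.range x).Finite := by
    have hsub : Set.range x ⊆ Set.range c := by
      rintro _ ⟨t, rfl⟩
      obtain ⟨a, ha⟩ := hxr t
      exact ⟨a, ha.symm⟩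
    exact (Set.finite_range c).subset hsub
  rw [entropy]
  refine iSup₂_le fun 𝒲 h𝒲 => ?_
  apply EReal_le_of_forall_add
  intro δ hδ
  obtain ⟨s, hs⟩ := exists_nat_gt (1 / δ)
  have hεδ : 1 / ((s : ℝ) + 1) ≤ δ := by
    have h1 : (0 : ℝ) < 1 / δ := by positivity
    have h2 : 1 / δ ≤ (s : ℝ) + 1 := by linarith
    calc 1 / ((s : ℝ) + 1) ≤ 1 / (1 / δ) := by
          apply one_div_le_one_div_of_le h1 h2
    _ = δ := one_div_one_div δ
  obtain ⟨L, W, hL, hcard, halign⟩ := halignAll s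
  obtain ⟨Lb, hLb, hleb⟩ := exists_lebesgue x hfin h𝒲
  set ε := 1 / ((s : ℝ) + 1) with hε
  have hεpos : 0 < ε := by rw [hε]; positivity
  have hWne : W.Nonempty := by
    obtain ⟨w, hw, _⟩ := halign 0
    exact ⟨w, hw⟩
  have hS1 : (1 : ℝ) ≤ (W.card : ℝ) := by exact_mod_cast Finset.card_pos.2 hWne
  have hL1 : (1 : ℝ) ≤ (L : ℝ) := by exact_mod_cast hL
  set a : ℝ := Real.log L + (lam + ε) * (Lb + 2 * L) with ha
  have hanneg : 0 ≤ a := by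
    have h1 : 0 ≤ Real.log L := Real.log_nonneg hL1
    have h2 : (0 : ℝ) ≤ (Lb : ℝ) + 2 * L := by positivity
    nlinarith
  have hlogb : ∀ n : ℕ, 1 ≤ n →
      Real.log (coverNum (iterJoin (shiftOn x) 𝒲 n)) / n ≤ (lam + ε) + a / n := by
    intro n hn
    have hnR : (0 : ℝ) < (n : ℝ) := by exact_mod_cast hn
    have hlog : Real.log (coverNum (iterJoin (shiftOn x) 𝒲 n)) ≤ (lam + ε) * n + a := by
      rcases Nat.eq_zero_or_pos (coverNum (iterJoin (shiftOn x) 𝒲 n)) with h0 | hpos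
      · rw [h0]
        simp only [Nat.cast_zero, Real.log_zero]
        nlinarith
      · have hcnb := coverNum_window_bound x c hxr hL halign h𝒲 hleb n
        have hposR : (0 : ℝ) < (coverNum (iterJoin (shiftOn x) 𝒲 n) : ℝ) := by
          exact_mod_cast hpos
        have hcnbR : ((coverNum (iterJoin (shiftOn x) 𝒲 n)) : ℝ)
            ≤ (L : ℝ) * (W.card : ℝ) ^ ((n + Lb) / L + 2) := by
          exact_mod_cast hcnb
        have h1 : Real.log (coverNum (iterJoin (shiftOn x) 𝒲 n))
            ≤ Real.log ((L : ℝ) * (W.card : ℝ) ^ ((n + Lb) / L + 2)) :=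
          Real.log_le_log hposR hcnbR
        have h2 : Real.log ((L : ℝ) * (W.card : ℝ) ^ ((n + Lb) / L + 2))
            = Real.log L + (((n + Lb) / L + 2 : ℕ) : ℝ) * Real.log (W.card : ℝ) := by
          rw [Real.log_mul (by positivity) (by positivity), Real.log_pow]
        have h3 : Real.log (W.card : ℝ) ≤ (lam + ε) * L := by
          rw [Real.log_le_iff_le_exp (by linarith)]
          exact hcard
        have h3' : 0 ≤ Real.log (W.card : ℝ) := Real.log_nonneg hS1
        have h4 : (((n + Lb) / L + 2 : ℕ) : ℝ) ≤ ((n : ℝ) + Lb) / L + 2 := by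
          push_cast
          have := Nat.cast_div_le (α := ℝ) (m := n + Lb) (n := L)
          push_cast at this
          linarith
        have h5 : (((n + Lb) / L + 2 : ℕ) : ℝ) * Real.log (W.card : ℝ)
            ≤ (((n : ℝ) + Lb) / L + 2) * ((lam + ε) * L) := by
          apply mul_le_mul h4 h3 h3'
          have : (0:ℝ) ≤ ((n:ℝ) + Lb) / L := by positivity
          linarith
        have h6 : (((n : ℝ) + Lb) / L + 2) * ((lam + ε) * L)
            = (lam + ε) * ((n : ℝ) + Lb + 2 * L) := by
          field_simp
        have h7 : (lam + ε) * ((n : ℝ) + Lb + 2 * L)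
            = (lam + ε) * n + (lam + ε) * ((Lb : ℝ) + 2 * L) := by ring
        rw [h2] at h1
        rw [h6, h7] at h5
        rw [ha]
        linarith
    calc Real.log (coverNum (iterJoin (shiftOn x) 𝒲 n)) / n
        ≤ ((lam + ε) * n + a) / n := by gcongr
    _ = (lam + ε) + a / n := by field_simp
  have hmaj : ∀ᶠ n : ℕ in atTop,
      ((Real.log (coverNum (iterJoin (shiftOn x) 𝒲 n)) / n : ℝ) : EReal)
        ≤ (((lam + ε) + a / n : ℝ) : EReal) :=
    eventually_atTop.2 ⟨1, fun n hn => EReal.coe_le_coe_iff.2 (hlogb n hn)⟩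
  have htend : Tendsto (fun n : ℕ => (((lam + ε) + a / n : ℝ) : EReal)) atTop
      (𝓝 (((lam + ε : ℝ)) : EReal)) := by
    have h1 : Tendsto (fun n : ℕ => (lam + ε) + a / n) atTop (𝓝 ((lam + ε) + 0)) :=
      tendsto_const_nhds.add
        (Tendsto.div_atTop tendsto_const_nhds tendsto_natCast_atTop_atTop)
    rw [add_zero] at h1
    exact (continuous_coe_real_ereal.tendsto _).comp h1
  have hlim : coverEntropy (shiftOn x) 𝒲 ≤ (((lam + ε) : ℝ) : EReal) := by
    rw [coverEntropy]
    calc Filter.atTop.limsup (fun n : ℕ =>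
          ((Real.log (coverNum (iterJoin (shiftOn x) 𝒲 n)) / n : ℝ) : EReal))
        ≤ Filter.atTop.limsup (fun n : ℕ => (((lam + ε) + a / n : ℝ) : EReal)) :=
          limsup_le_limsup hmaj
    _ = (((lam + ε) : ℝ) : EReal) := htend.limsup_eq
  refine hlim.trans ?_
  exact EReal.coe_le_coe_iff.2 (by linarith)

end AnqieAux

/-- Let `(X, d)` be a compact metric space and `f : ℕ → X` with
`AE(f) = λ`, `0 ≤ λ < +∞`. For every `N ≥ 1` there is a map `f_N : ℕ → X` whose
range is a finite subset of `f(ℕ)`, with `AE(f_N) ≤ λ` and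
`sup_n d(f_N(n), f(n)) ≤ 1/N`. -/
theorem anqie_finite_range_approximation {X : Type*} [MetricSpace X] [CompactSpace X]
    (f : ℕ → X) (lam : ℝ) (hlam : 0 ≤ lam) (hAE : Anqie.AE f = (lam : EReal)) :
    ∀ N : ℕ, 1 ≤ N → ∃ fN : ℕ → X,
      Set.range fN ⊆ Set.range f ∧ (Set.range fN).Finite ∧
      Anqie.AE fN ≤ (lam : EReal) ∧ ∀ n, dist (fN n) (f n) ≤ 1 / (N : ℝ) := by
  intro N hN
  classical
  have hNR : (0 : ℝ) < (N : ℝ) := by exact_mod_cast hN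
  set ρ : ℝ := 1 / (N : ℝ) with hρ
  have hρpos : 0 < ρ := by positivity
  set K := closure (Set.range f) with hK
  have hKcomp : IsCompact K := isClosed_closure.isCompact
  have hKcov : K ⊆ ⋃ y ∈ Set.range f, Metric.ball y ρ := by
    intro z hz
    obtain ⟨y, hy, hd⟩ := Metric.mem_closure_iff.1 hz ρ hρpos
    exact Set.mem_biUnion hy (Metric.mem_ball.2 hd)
  obtain ⟨b', hb'sub, hb'fin, hb'cov⟩ :=
    hKcomp.elim_finite_subcover_image (fun y _ => Metric.isOpen_ball) hKcov
  set ιt := {y // y ∈ hb'fin.toFinset} with hιt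
  haveI : Fintype ιt := FinsetCoe.fintype _
  have hf0K : f 0 ∈ K := subset_closure (Set.mem_range_self 0)
  have hne : Nonempty ιt := by
    have := hb'cov hf0K
    rw [Set.mem_iUnion₂] at this
    obtain ⟨y, hyb', _⟩ := this
    exact ⟨⟨y, hb'fin.mem_toFinset.2 hyb'⟩⟩
  set c : ιt → X := fun i => (i : X) with hc
  set U : ιt → Set X := fun i => Metric.ball (c i) ρ with hUdef
  have hU : ∀ i, IsOpen (U i) := fun _ => Metric.isOpen_ball
  have hUcov : ∀ ω : ↥(Anqie.orbitClosure f), ∃ i, (ω : ℕ → X) 0 ∈ U i := by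
    intro ω
    have h0 : (ω : ℕ → X) 0 ∈ K :=
      AnqieAux.orbitClosure_coords_mem isClosed_closure
        (fun n => subset_closure (Set.mem_range_self n)) ω 0
    have := hb'cov h0
    rw [Set.mem_iUnion₂] at this
    obtain ⟨y, hyb', hy⟩ := this
    exact ⟨⟨y, hb'fin.mem_toFinset.2 hyb'⟩, hy⟩
  have hent : Anqie.entropy (Anqie.shiftOn f) ≤ (lam : EReal) := by
    rw [show Anqie.entropy (Anqie.shiftOn f) = Anqie.AE f from rfl, hAE]
  obtain ⟨a₀⟩ := hne
  obtain ⟨x, hxval, hxalign⟩ := AnqieAux.exists_x f U hU a₀ c lam hlam hent hUcov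
  have hxr : ∀ t, ∃ a : ιt, x t = c a := fun t => by
    obtain ⟨a, hxa, _⟩ := hxval t
    exact ⟨a, hxa⟩
  refine ⟨x, ?_, ?_, ?_, ?_⟩
  · rintro _ ⟨t, rfl⟩
    obtain ⟨a, hxa, _⟩ := hxval t
    rw [hxa]
    exact hb'sub (hb'fin.mem_toFinset.1 a.2)
  · apply (Set.finite_range c).subset
    rintro _ ⟨t, rfl⟩
    obtain ⟨a, hxa, _⟩ := hxval t
    exact ⟨a, hxa.symm⟩
  · exact AnqieAux.entropy_le_of_alignments x c hxr lam hlam hxalign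
  · intro t
    obtain ⟨a, hxa, hfa⟩ := hxval t
    rw [hxa]
    have hdist : dist (f t) (c a) < ρ := Metric.mem_ball.1 hfa
    rw [dist_comm] at hdist
    exact le_of_lt hdist
end

section
/- Let X be a compact Hausdorff space and f : ℕ → X a map with AE(f) = λ, where 0 ≤ λ < +∞. Let U be an open subset of X and K ⊆ U a closed subset of X. Then there exists a set C ⊆ ℕ with f⁻¹(K) ⊆ C ⊆ f⁻¹(U) such that the characteristic function χ_C : ℕ → ℂ of C satisfies AE(χ_C) ≤ λ. -/
open Filter Set Topology

/-!
Encode the open cover `{U, Kᶜ}` of `X` as `W : Bool → Set X`. For `c > λ`, the `n`-th join of the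
cover of `X_f` by the cylinders of admissible words of length `L` has a subcover with at most
`exp (c n)` members, and each member determines an admissible word of length `n = m L` made of
admissible `L`-blocks. Iterating with `c = λ + 1 / (k + 1)` gives a tower of word sets `T k` of
lengths `L k ∣ L (k + 1)`, each level concatenated from the previous one. Reading `f` along
consecutive segments of lengths `L k`, with a word of `T k` on the `k`-th segment, yields
`t : ℕ → Bool` with `f n ∈ W (t n)` whose tail is a concatenation of words of `T k`, for every `k`.
So `χ_C`, `C = {n | t n}`, has at most `M + L |T k| ^ (n / L + 2)` factors of length `n`; as every
open cover of its orbit closure is refined by the cylinders of some fixed length, the entropy of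
each cover is at most the growth rate `λ + 1 / (k + 1)` of these factor counts.
-/

open Real

namespace Anqie

section Entropy

variable {Y : Type*} {T : Y → Y} {𝒰 : Set (Set Y)}

lemma IsOpenCover.iterJoin [TopologicalSpace Y] (hT : Continuous T) (h : IsOpenCover 𝒰) (n : ℕ) :
    IsOpenCover (iterJoin T 𝒰 n) := by
  refine ⟨?_, eq_univ_of_forall fun y => ?_⟩
  · rintro V ⟨u, hu, rfl⟩
    exact isOpen_iInter_of_finite fun j => (h.1 _ (hu j)).preimage (hT.iterate j)
  · have hy : ∀ j : Fin n, ∃ u ∈ 𝒰, T^[j] y ∈ u := fun j => by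
      simpa only [← mem_sUnion, h.2] using mem_univ (T^[j] y)
    choose u hu hyu using hy
    exact ⟨_, ⟨u, hu, rfl⟩, mem_iInter.2 hyu⟩

lemma coverNum_le_card {𝒱 : Set (Set Y)} {F : Finset (Set Y)} (hF : (F : Set (Set Y)) ⊆ 𝒱)
    (hcov : ⋃₀ (F : Set (Set Y)) = univ) : coverNum 𝒱 ≤ F.card :=
  Nat.sInf_le ⟨F, hF, hcov, rfl⟩

lemma exists_finset_card_eq_coverNum [TopologicalSpace Y] [CompactSpace Y] {𝒱 : Set (Set Y)}
    (h : IsOpenCover 𝒱) :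
    ∃ F : Finset (Set Y), (F : Set (Set Y)) ⊆ 𝒱 ∧ ⋃₀ (F : Set (Set Y)) = univ ∧
      F.card = coverNum 𝒱 := by
  obtain ⟨F, hF, hfin, hcov⟩ := isCompact_univ.elim_finite_subcover_image (b := 𝒱) (c := id)
    h.1 (by simp [← sUnion_eq_biUnion, h.2])
  have hne : {k | ∃ F : Finset (Set Y), (F : Set (Set Y)) ⊆ 𝒱 ∧
      ⋃₀ (F : Set (Set Y)) = univ ∧ F.card = k}.Nonempty :=
    ⟨_, hfin.toFinset, by simpa using hF,
      by simpa [sUnion_eq_biUnion, univ_subset_iff] using hcov, rfl⟩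
  exact Nat.sInf_mem hne

lemma coverEntropy_le_entropy [TopologicalSpace Y] (h : IsOpenCover 𝒰) :
    coverEntropy T 𝒰 ≤ entropy T :=
  le_iSup₂ (f := fun 𝒰 _ => coverEntropy T 𝒰) 𝒰 h

lemma eventually_coverNum_le_exp {c : ℝ} (h : coverEntropy T 𝒰 < c) :
    ∀ᶠ n : ℕ in atTop, (coverNum (iterJoin T 𝒰 n) : ℝ) ≤ exp (c * n) := by
  filter_upwards [eventually_lt_of_limsup_lt h, eventually_gt_atTop 0] with n hlt hn
  rcases (coverNum (iterJoin T 𝒰 n)).eq_zero_or_pos with h0 | hpos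
  · simpa [h0] using (exp_pos _).le
  · have hlog : log (coverNum (iterJoin T 𝒰 n)) < c * n := by
      have := EReal.coe_lt_coe_iff.1 hlt
      rwa [div_lt_iff₀ (by exact_mod_cast hn)] at this
    rw [← exp_log (Nat.cast_pos.2 hpos)]
    exact exp_le_exp.2 hlog.le

lemma coverEntropy_le_of_coverNum_le {C a : ℝ} (hC : 1 ≤ C) (ha : 0 ≤ a)
    (h : ∀ n, (coverNum (iterJoin T 𝒰 n) : ℝ) ≤ C * exp (a * n)) : coverEntropy T 𝒰 ≤ a := by
  have hbound : ∀ n : ℕ, log (coverNum (iterJoin T 𝒰 n)) / n ≤ log C / n + a := fun n => by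
    rcases (coverNum (iterJoin T 𝒰 n)).eq_zero_or_pos with h0 | hpos
    · rw [h0, Nat.cast_zero, log_zero, zero_div]
      exact add_nonneg (div_nonneg (log_nonneg hC) n.cast_nonneg) ha
    · have hlog : log (coverNum (iterJoin T 𝒰 n)) ≤ log C + a * n := by
        calc log (coverNum (iterJoin T 𝒰 n)) ≤ log (C * exp (a * n)) :=
              log_le_log (Nat.cast_pos.2 hpos) (h n)
          _ = log C + a * n := by rw [log_mul (by positivity) (exp_pos _).ne', log_exp]
      rcases n.eq_zero_or_pos with rfl | hn
      · simpa using ha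
      · rw [div_add' _ _ _ (by positivity)]
        exact div_le_div_of_nonneg_right hlog n.cast_nonneg
  have hlim : Tendsto (fun n : ℕ => ((log C / n + a : ℝ) : EReal)) atTop (𝓝 (a : EReal)) := by
    have := (tendsto_const_div_atTop_nhds_zero_nat (log C)).add_const a
    rw [zero_add] at this
    exact (continuous_coe_real_ereal.tendsto _).comp this
  calc coverEntropy T 𝒰 ≤ atTop.limsup fun n : ℕ => ((log C / n + a : ℝ) : EReal) :=
        limsup_le_limsup (Eventually.of_forall fun n => EReal.coe_le_coe_iff.2 (hbound n))
    _ = a := hlim.limsup_eq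

end Entropy

section Shift

variable {X : Type*} [TopologicalSpace X]

lemma continuous_shiftOn (f : ℕ → X) : Continuous (shiftOn f) :=
  (continuous_pi fun k => (continuous_apply (k + 1)).comp continuous_subtype_val).subtype_mk
    fun ω => shift_mem_orbitClosure f ω.2

lemma iterate_shiftOn_apply (f : ℕ → X) (j : ℕ) (ω : orbitClosure f) (r : ℕ) :
    ((shiftOn f)^[j] ω).1 r = ω.1 (r + j) := by
  induction j generalizing ω with
  | zero => rfl
  | succ j ih => rw [Function.iterate_succ_apply, ih]; rfl

lemma orbit_mem_orbitClosure (f : ℕ → X) (m : ℕ) : (fun j => f (m + j)) ∈ orbitClosure f :=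
  subset_closure ⟨m, fun _ => rfl⟩

instance [CompactSpace X] (f : ℕ → X) : CompactSpace (orbitClosure f) :=
  isCompact_iff_compactSpace.mp isClosed_closure.isCompact

lemma exists_cylinder_subset_of_isOpen {x : ℕ → X} {O : Set (ℕ → X)} (hO : IsOpen O)
    (hx : x ∈ O) : ∃ ℓ, PiNat.cylinder x ℓ ⊆ O := by
  obtain ⟨I, u, hu, hIu⟩ := isOpen_pi_iff.1 hO x hx
  refine ⟨I.sup id + 1, fun y hy => hIu fun i hi => ?_⟩
  rw [hy i (Nat.lt_succ_of_le (Finset.le_sup (f := id) hi))]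
  exact (hu i hi).2

variable [T1Space X] {g : ℕ → X}

lemma orbitClosure_subset_pi (hg : (range g).Finite) :
    orbitClosure g ⊆ univ.pi fun _ => range g :=
  closure_minimal (by rintro ω ⟨m, hm⟩ j -; rw [hm]; exact mem_range_self _)
    (isClosed_set_pi fun _ _ => hg.isClosed)

lemma isCompact_orbitClosure_s16 (hg : (range g).Finite) : IsCompact (orbitClosure g) :=
  (isCompact_univ_pi fun _ => hg.isCompact).of_isClosed_subset isClosed_closure
    (orbitClosure_subset_pi hg)

/-- Since `g` takes finitely many values, "`ψ i = x i`" is an open condition on `X_g`. -/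
lemma exists_isOpen_iff_mem_cylinder (hg : (range g).Finite) (x : ℕ → X) (ℓ : ℕ) :
    ∃ O : Set (ℕ → X), IsOpen O ∧ ∀ ψ ∈ orbitClosure g, ψ ∈ O ↔ ψ ∈ PiNat.cylinder x ℓ := by
  refine ⟨⋂ i ∈ Finset.range ℓ, (fun ψ => ψ i) ⁻¹' (range g \ {x i})ᶜ,
    isOpen_biInter_finset fun i _ =>
      (hg.sdiff.isClosed.isOpen_compl).preimage (continuous_apply i), fun ψ hψ => ?_⟩
  simp only [mem_iInter, Finset.mem_range, mem_preimage, mem_compl_iff, Set.mem_sdiff,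
    mem_singleton_iff, not_and, not_not, PiNat.mem_cylinder_iff]
  exact forall₂_congr fun i _ => ⟨fun h => h (orbitClosure_subset_pi hg hψ i trivial),
    fun h _ => h⟩

lemma exists_orbit_mem_cylinder (hg : (range g).Finite) {ω : ℕ → X}
    (hω : ω ∈ orbitClosure g) (n : ℕ) : ∃ m, (fun j => g (m + j)) ∈ PiNat.cylinder ω n := by
  obtain ⟨O, hO, hOcyl⟩ := exists_isOpen_iff_mem_cylinder hg ω n
  obtain ⟨ψ, hψO, m, hm⟩ :=
    mem_closure_iff.1 hω O hO ((hOcyl ω hω).2 (PiNat.self_mem_cylinder ω n))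
  obtain rfl : ψ = fun j => g (m + j) := funext hm
  exact ⟨m, (hOcyl _ (orbit_mem_orbitClosure g m)).1 hψO⟩

lemma exists_uniform_cylinder_subset (hg : (range g).Finite)
    {𝒰 : Set (Set (orbitClosure g))} (h𝒰 : IsOpenCover 𝒰) :
    ∃ ℓ, ∀ m, ∃ O ∈ 𝒰, ∀ z : orbitClosure g,
      z.1 ∈ PiNat.cylinder (fun j => g (m + j)) ℓ → z ∈ O := by
  have hloc : ∀ z : orbitClosure g, ∃ ℓ, ∃ O ∈ 𝒰, ∀ z' : orbitClosure g,
      z'.1 ∈ PiNat.cylinder z.1 ℓ → z' ∈ O := fun z => by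
    obtain ⟨O, hO, hzO⟩ := mem_sUnion.1 (h𝒰.2.symm ▸ mem_univ z)
    obtain ⟨O', hO', rfl⟩ := isOpen_induced_iff.1 (h𝒰.1 O hO)
    obtain ⟨ℓ, hℓ⟩ := exists_cylinder_subset_of_isOpen hO' hzO
    exact ⟨ℓ, _, hO, fun z' hz' => hℓ hz'⟩
  choose ℓ O hO hℓ using hloc
  have hcyl : ∀ z : orbitClosure g,
      IsOpen {z' : orbitClosure g | z'.1 ∈ PiNat.cylinder z.1 (ℓ z)} := fun z => by
    obtain ⟨O', hO', hiff⟩ := exists_isOpen_iff_mem_cylinder hg z.1 (ℓ z)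
    exact isOpen_induced_iff.2 ⟨O', hO', ext fun z' => hiff z'.1 z'.2⟩
  have : CompactSpace (orbitClosure g) :=
    isCompact_iff_compactSpace.1 (isCompact_orbitClosure_s16 hg)
  obtain ⟨zs, hzs⟩ := isCompact_univ.elim_finite_subcover _ hcyl
    fun z _ => mem_iUnion.2 ⟨z, PiNat.self_mem_cylinder _ _⟩
  refine ⟨zs.sup ℓ, fun m => ?_⟩
  obtain ⟨z₀, hz₀, hm⟩ := mem_iUnion₂.1 (hzs (mem_univ ⟨_, orbit_mem_orbitClosure g m⟩))
  exact ⟨O z₀, hO z₀, fun z hz => hℓ z₀ z fun i hi =>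
    (hz i (hi.trans_le (Finset.le_sup hz₀))).trans (hm i hi)⟩

end Shift

section Complexity

variable {α : Type*}

def window (s : ℕ → α) (m n : ℕ) : Fin n → α := fun j => s (m + j)

noncomputable def complexity (s : ℕ → α) (n : ℕ) : ℕ := (range fun m => window s m n).ncard

def IsTiledAtRate (s : ℕ → α) (c : ℝ) : Prop :=
  ∀ δ > 0, ∃ L > 0, ∃ M, ∃ S : Finset (Fin L → α),
    (S.card : ℝ) ≤ exp ((c + δ) * L) ∧ ∀ i, window s (M + i * L) L ∈ S

lemma IsTiledAtRate.comp {γ : Type*} {s : ℕ → α} {c : ℝ} (h : IsTiledAtRate s c) (φ : α → γ) :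
    IsTiledAtRate (φ ∘ s) c := by
  classical
  intro δ hδ
  obtain ⟨L, hL, M, S, hcard, hS⟩ := h δ hδ
  exact ⟨L, hL, M, S.image (φ ∘ ·), le_trans (by exact_mod_cast Finset.card_image_le) hcard,
    fun i => Finset.mem_image_of_mem _ (hS i)⟩

/-- A factor starting `o < L` letters after an aligned position is read off from `o` and the
`n / L + 2` aligned blocks that follow. -/
lemma complexity_le_of_window_mem {s : ℕ → α} {L M : ℕ} (hL : 0 < L) {S : Finset (Fin L → α)}
    (hS : ∀ i, window s (M + i * L) L ∈ S) (n : ℕ) :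
    complexity s n ≤ M + L * S.card ^ (n / L + 2) := by
  classical
  have hN : ∀ o < L, ∀ j < n, (o + j) / L < n / L + 2 := fun o ho j hj => by
    have := Nat.lt_div_mul_add (a := n) hL
    rw [Nat.div_lt_iff_lt_mul hL]
    nlinarith
  let decode : Fin L × (Fin (n / L + 2) → Fin L → α) → Fin n → α := fun p j =>
    p.2 ⟨(p.1 + j) / L, hN _ p.1.2 _ j.2⟩ ⟨(p.1 + j) % L, Nat.mod_lt _ hL⟩
  let A := (Finset.range M).image fun m => window s m n
  let B := (Finset.univ ×ˢ Fintype.piFinset fun _ => S).image decode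
  have hsub : (range fun m => window s m n) ⊆ ↑(A ∪ B) := by
    rintro _ ⟨m, rfl⟩
    rcases lt_or_ge m M with hm | hm
    · exact Finset.mem_union_left _ (Finset.mem_image_of_mem _ (Finset.mem_range.2 hm))
    · refine Finset.mem_union_right _ (Finset.mem_image.2
        ⟨(⟨(m - M) % L, Nat.mod_lt _ hL⟩, fun i => window s (M + ((m - M) / L + i) * L) L),
          by simp [hS], funext fun j => ?_⟩)
      have h₁ := Nat.div_add_mod' (m - M) L
      have h₂ := Nat.div_add_mod' ((m - M) % L + j) L
      simp only [decode, window, add_mul]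
      congr 1
      omega
  calc complexity s n ≤ (A ∪ B).card :=
        (ncard_le_ncard hsub (Finset.finite_toSet _)).trans (ncard_coe_finset _).le
    _ ≤ A.card + B.card := Finset.card_union_le _ _
    _ ≤ M + L * S.card ^ (n / L + 2) := by
      gcongr
      · exact Finset.card_image_le.trans (Finset.card_range M).le
      · exact Finset.card_image_le.trans (by simp [Fintype.card_piFinset])

lemma pow_div_le_exp {s a : ℝ} {L : ℕ} (hs : 0 ≤ s) (ha : 0 ≤ a) (h : s ≤ exp (a * L))
    (n : ℕ) : s ^ (n / L) ≤ exp (a * n) :=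
  calc s ^ (n / L) ≤ exp (a * L) ^ (n / L) := pow_le_pow_left₀ hs h _
    _ = exp (a * ((n / L * L : ℕ) : ℝ)) := by rw [← exp_nat_mul]; push_cast; ring_nf
    _ ≤ exp (a * n) :=
      exp_le_exp.2 (mul_le_mul_of_nonneg_left (by exact_mod_cast Nat.div_mul_le_self n L) ha)

lemma complexity_le_exp {s : ℕ → α} {L M : ℕ} (hL : 0 < L) {S : Finset (Fin L → α)}
    (hS : ∀ i, window s (M + i * L) L ∈ S) {a : ℝ} (ha : 0 ≤ a)
    (hcard : (S.card : ℝ) ≤ exp (a * L)) (n : ℕ) :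
    (complexity s n : ℝ) ≤ (M + L * S.card ^ 2) * exp (a * n) := by
  have hexp : 1 ≤ exp (a * n) := one_le_exp (by positivity)
  calc (complexity s n : ℝ) ≤ M + L * ((S.card : ℝ) ^ (n / L) * S.card ^ 2) := by
        rw [← pow_add]; exact_mod_cast complexity_le_of_window_mem hL hS n
    _ ≤ M * exp (a * n) + L * (exp (a * n) * S.card ^ 2) := by
        gcongr
        · exact le_mul_of_one_le_right (by positivity) hexp
        · exact pow_div_le_exp (by positivity) ha hcard n
    _ = (M + L * S.card ^ 2) * exp (a * n) := by ring

lemma finite_range_window {g : ℕ → α} (hg : (range g).Finite) (n : ℕ) :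
    (range fun m => window g m n).Finite :=
  (Set.Finite.pi fun _ => hg).subset <| by
    rintro _ ⟨m, rfl⟩ j -
    exact mem_range_self _

variable [TopologicalSpace α] [T1Space α] {g : ℕ → α}

/-- An open cover of `X_g` is refined by the cylinders of some length `ℓ`, so the `n`-th join
needs no more sets than there are factors of length `n + ℓ`. -/
lemma exists_coverNum_iterJoin_le_complexity (hg : (range g).Finite)
    {𝒰 : Set (Set (orbitClosure g))} (h𝒰 : IsOpenCover 𝒰) :
    ∃ ℓ, ∀ n, coverNum (iterJoin (shiftOn g) 𝒰 n) ≤ complexity g (n + ℓ) := by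
  classical
  obtain ⟨ℓ, hℓ⟩ := exists_uniform_cylinder_subset hg h𝒰
  choose O hO hOsub using hℓ
  refine ⟨ℓ, fun n => ?_⟩
  let rep := Function.invFun fun m => window g m (n + ℓ)
  let V := fun v => ⋂ j : Fin n, (shiftOn g)^[j] ⁻¹' O (rep v + j)
  have hfin := finite_range_window hg (n + ℓ)
  have hcov : ⋃₀ ((hfin.toFinset.image V : Finset _) : Set (Set (orbitClosure g))) = univ := by
    refine eq_univ_of_forall fun z => ?_
    obtain ⟨m, hm⟩ := exists_orbit_mem_cylinder hg z.2 (n + ℓ)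
    have hrep : window g (rep (window g m (n + ℓ))) (n + ℓ) = window g m (n + ℓ) :=
      Function.invFun_eq (f := fun m => window g m (n + ℓ)) ⟨m, rfl⟩
    refine ⟨V (window g m (n + ℓ)), by simp, mem_iInter.2 fun j => hOsub _ _ fun r hr => ?_⟩
    have := congrFun hrep ⟨j + r, by omega⟩
    simp only [window] at this
    rw [iterate_shiftOn_apply, ← hm (r + j) (by omega)]
    simp only [add_assoc, this, add_comm r]
  calc coverNum (iterJoin (shiftOn g) 𝒰 n) ≤ (hfin.toFinset.image V).card :=
        coverNum_le_card (by
          intro _ hW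
          obtain ⟨v, -, rfl⟩ := Finset.mem_image.1 hW
          exact ⟨fun j => O (rep v + j), fun j => hO _, rfl⟩) hcov
    _ ≤ hfin.toFinset.card := Finset.card_image_le
    _ = complexity g (n + ℓ) := (ncard_eq_toFinset_card _ hfin).symm

theorem AE_le_of_isTiledAtRate (hg : (range g).Finite) {c : ℝ} (hc : 0 ≤ c)
    (h : IsTiledAtRate g c) : AE g ≤ c := by
  refine iSup₂_le fun 𝒰 h𝒰 => EReal.le_of_forall_lt_iff_le.1 fun z hz => ?_
  have hcz : c < z := EReal.coe_lt_coe_iff.1 hz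
  obtain ⟨L, hL, M, S, hcard, hS⟩ := h (z - c) (sub_pos.2 hcz)
  rw [add_sub_cancel] at hcard
  obtain ⟨ℓ, hℓ⟩ := exists_coverNum_iterJoin_le_complexity hg h𝒰
  have hz : 0 ≤ z := by linarith
  have hS1 : 1 ≤ M + L * S.card ^ 2 :=
    le_add_left (Nat.one_le_iff_ne_zero.2 (by simp [hL.ne', Finset.ne_empty_of_mem (hS 0)]))
  refine coverEntropy_le_of_coverNum_le (C := (M + L * S.card ^ 2) * exp (z * ℓ)) ?_ hz
    fun n => ?_
  · exact one_le_mul_of_one_le_of_one_le (by exact_mod_cast hS1) (one_le_exp (by positivity))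
  · calc (coverNum (iterJoin (shiftOn g) 𝒰 n) : ℝ) ≤ complexity g (n + ℓ) := by
          exact_mod_cast hℓ n
      _ ≤ (M + L * S.card ^ 2) * exp (z * (n + ℓ : ℕ)) :=
          complexity_le_exp hL hS hz hcard _
      _ = (M + L * S.card ^ 2) * exp (z * ℓ) * exp (z * n) := by
          push_cast; rw [mul_add, exp_add]; ring

end Complexity

section Tiling

variable {β : Type*} {T T₁ T₂ : Finset (ℕ → β)} {L L₁ L₂ N N₁ N₂ : ℕ}

def IsTiledBy (T : Finset (ℕ → β)) (L N : ℕ) (w : ℕ → β) : Prop :=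
  ∀ i < N, ∃ v ∈ T, ∀ r < L, w (i * L + r) = v r

lemma isTiledBy_one {w : ℕ → β} (hw : w ∈ T) : IsTiledBy T L 1 w :=
  fun i hi => ⟨w, hw, fun r _ => by rw [Nat.lt_one_iff.1 hi, zero_mul, zero_add]⟩

lemma IsTiledBy.congr {w w' : ℕ → β} (h : IsTiledBy T L N w) (hw : ∀ p < N * L, w' p = w p) :
    IsTiledBy T L N w' := fun i hi => by
  obtain ⟨v, hv, hwv⟩ := h i hi
  exact ⟨v, hv, fun r hr => (hw _ (by nlinarith)).trans (hwv r hr)⟩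

lemma IsTiledBy.append {s : ℕ → β} {a : ℕ} (h₁ : IsTiledBy T L N₁ fun n => s (a + n))
    (h₂ : IsTiledBy T L N₂ fun n => s (a + N₁ * L + n)) :
    IsTiledBy T L (N₁ + N₂) fun n => s (a + n) := fun i hi => by
  rcases lt_or_ge i N₁ with hi₁ | hi₁
  · exact h₁ i hi₁
  · obtain ⟨v, hv, hsv⟩ := h₂ (i - N₁) (by omega)
    refine ⟨v, hv, fun r hr => ?_⟩
    have := Nat.mul_le_mul_right L hi₁
    rw [← hsv r hr, Nat.sub_mul]
    exact congrArg s (by omega)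

lemma IsTiledBy.trans {w : ℕ → β} (h₂ : IsTiledBy T₂ L₂ N₂ w)
    (h₁ : ∀ v ∈ T₂, IsTiledBy T₁ L₁ N₁ v) (hL : L₂ = N₁ * L₁) :
    IsTiledBy T₁ L₁ (N₂ * N₁) w := fun i hi => by
  have hN₁ : 0 < N₁ := Nat.pos_of_ne_zero (by rintro rfl; simp at hi)
  obtain ⟨v, hv, hwv⟩ := h₂ (i / N₁) (Nat.div_lt_of_lt_mul (by rwa [mul_comm]))
  obtain ⟨v', hv', hvv'⟩ := h₁ v hv (i % N₁) (Nat.mod_lt _ hN₁)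
  refine ⟨v', hv', fun r hr => ?_⟩
  have hi' : i * L₁ = i / N₁ * L₂ + i % N₁ * L₁ := by
    rw [hL, ← mul_assoc, ← add_mul, Nat.div_add_mod']
  have hlt : i % N₁ * L₁ + r < L₂ := by
    rw [hL]; nlinarith [Nat.mod_lt i hN₁]
  rw [hi', add_assoc, hwv _ hlt, hvv' r hr]

end Tiling

section Tower

variable {β : Type*} {L : ℕ → ℕ} {T : ℕ → Finset (ℕ → β)}

lemma isTiledBy_of_tower
    (htower : ∀ k, ∃ m, L (k + 1) = m * L k ∧ ∀ w ∈ T (k + 1), IsTiledBy (T k) (L k) m w)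
    (k j : ℕ) : ∃ N, L (k + j) = N * L k ∧ ∀ w ∈ T (k + j), IsTiledBy (T k) (L k) N w := by
  induction j with
  | zero => exact ⟨1, (one_mul _).symm, fun w hw => isTiledBy_one hw⟩
  | succ j ih =>
    obtain ⟨N, hN, hNtiled⟩ := ih
    obtain ⟨m, hm, hmtiled⟩ := htower (k + j)
    exact ⟨m * N, by rw [← add_assoc, hm, hN, mul_assoc], fun w hw =>
      (hmtiled w hw).trans hNtiled hN⟩

lemma isTiledBy_tail_of_tower {M : ℕ → ℕ} {w : ℕ → ℕ → β} {t : ℕ → β} (hL : ∀ k, 0 < L k)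
    (hM : ∀ k, M (k + 1) = M k + L k)
    (htower : ∀ k, ∃ m, L (k + 1) = m * L k ∧ ∀ w ∈ T (k + 1), IsTiledBy (T k) (L k) m w)
    (hwT : ∀ k, w k ∈ T k) (ht : ∀ k, ∀ r < L k, t (M k + r) = w k r) (k j : ℕ) :
    ∃ N, j ≤ N ∧ M (k + j) = M k + N * L k ∧
      IsTiledBy (T k) (L k) N fun n => t (M k + n) := by
  induction j with
  | zero => exact ⟨0, le_rfl, by simp, fun i hi => absurd hi (Nat.not_lt_zero _)⟩
  | succ j ih =>
    obtain ⟨N, hjN, hMN, htiled⟩ := ih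
    obtain ⟨N', hN', hN'tiled⟩ := isTiledBy_of_tower htower k j
    have hN'pos : 0 < N' := Nat.pos_of_ne_zero fun h => by
      have := hL (k + j); simp [hN', h] at this
    have hseg : IsTiledBy (T k) (L k) N' fun n => t (M k + N * L k + n) :=
      (hN'tiled _ (hwT _)).congr fun p hp => by rw [← hMN, ht _ _ (hN' ▸ hp)]
    exact ⟨N + N', by omega, by rw [← add_assoc, hM, hMN, hN', add_mul, add_assoc],
      htiled.append hseg⟩

end Tower

section Segments

variable {L M : ℕ → ℕ}

lemma exists_segment (hL : ∀ k, 0 < L k) (hM₀ : M 0 = 0) (hM : ∀ k, M (k + 1) = M k + L k)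
    (n : ℕ) : ∃ k, ∃ r < L k, n = M k + r := by
  have hMk : ∀ k, k ≤ M k := fun k => by
    induction k with
    | zero => omega
    | succ k ih => have := hL k; rw [hM]; omega
  have hex : ∃ k, n < M (k + 1) := ⟨n, (hMk (n + 1)).trans_lt' n.lt_succ_self⟩
  refine ⟨Nat.find hex, n - M (Nat.find hex), ?_, ?_⟩ <;>
  · have hlt := Nat.find_spec hex
    have hle : M (Nat.find hex) ≤ n := by
      rcases h : Nat.find hex with _ | k
      · rw [hM₀]; exact n.zero_le
      · exact not_lt.1 (Nat.find_min hex (by omega : k < Nat.find hex))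
    rw [hM] at hlt
    omega

lemma segment_eq_of_eq (hM : ∀ k, M (k + 1) = M k + L k) {k k' r r' : ℕ} (hr : r < L k)
    (hr' : r' < L k') (h : M k + r = M k' + r') : k = k' ∧ r = r' := by
  have hmono : Monotone M := monotone_nat_of_le_succ fun k => by rw [hM]; omega
  have hk : ∀ {k k' r r'}, r < L k → M k + r = M k' + r' → k' ≤ k := fun {k k' r r'} hr h => by
    by_contra! hlt
    have := hmono (Nat.succ_le_of_lt hlt)
    rw [hM] at this
    omega
  obtain rfl := le_antisymm (hk hr' h.symm) (hk hr h)
  exact ⟨rfl, by omega⟩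

lemma exists_seq_eq_on_segments {β : Type*} (hL : ∀ k, 0 < L k) (hM₀ : M 0 = 0)
    (hM : ∀ k, M (k + 1) = M k + L k) (w : ℕ → ℕ → β) :
    ∃ t : ℕ → β, ∀ k, ∀ r < L k, t (M k + r) = w k r := by
  choose k r hr hn using exists_segment hL hM₀ hM
  refine ⟨fun n => w (k n) (r n), fun k₀ r₀ hr₀ => ?_⟩
  obtain ⟨hk, hr⟩ := segment_eq_of_eq hM (hr _) hr₀ (hn (M k₀ + r₀)).symm
  simp only [hk, hr]

end Segments

lemma exists_seq_of_forall_exists {α : Type*} {P : α → Prop} {R : ℕ → α → α → Prop} {a₀ : α}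
    (h₀ : P a₀) (h : ∀ k a, P a → ∃ b, P b ∧ R k a b) :
    ∃ g : ℕ → α, ∀ k, P (g k) ∧ R k (g k) (g (k + 1)) := by
  have : Nonempty α := ⟨a₀⟩
  choose! next hnext using h
  let g : ℕ → α := fun k => Nat.rec a₀ next k
  have hg : ∀ k, P (g k) := fun k => by
    induction k with
    | zero => exact h₀
    | succ k ih => exact (hnext k _ ih).1
  exact ⟨g, fun k => ⟨hg k, (hnext k _ (hg k)).2⟩⟩

section Coding

variable {X β : Type*} [TopologicalSpace X] (f : ℕ → X) (W : β → Set X)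

def wordCylinder (L : ℕ) (w : ℕ → β) : Set (orbitClosure f) :=
  {ω | ∀ j < L, ω.1 j ∈ W (w j)}

def IsWordCover (L : ℕ) (T : Finset (ℕ → β)) : Prop :=
  ∀ ω : orbitClosure f, ∃ w ∈ T, ω ∈ wordCylinder f W L w

variable {f W} {L : ℕ} {T : Finset (ℕ → β)}

lemma isOpen_wordCylinder (hW : ∀ b, IsOpen (W b)) (L : ℕ) (w : ℕ → β) :
    IsOpen (wordCylinder f W L w) := by
  have : wordCylinder f W L w =
      ⋂ j ∈ Finset.range L, (fun ω : orbitClosure f => ω.1 j) ⁻¹' W (w j) := by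
    ext; simp [wordCylinder]
  rw [this]
  exact isOpen_biInter_finset fun j _ =>
    (hW _).preimage ((continuous_apply j).comp continuous_subtype_val)

lemma IsWordCover.isOpenCover (hW : ∀ b, IsOpen (W b)) (h : IsWordCover f W L T) :
    IsOpenCover (wordCylinder f W L '' ↑T) := by
  refine ⟨by rintro _ ⟨w, -, rfl⟩; exact isOpen_wordCylinder hW L w,
    eq_univ_of_forall fun ω => ?_⟩
  obtain ⟨w, hw, hωw⟩ := h ω
  exact ⟨_, mem_image_of_mem _ hw, hωw⟩

/-- The `i`-th block of the word is read off from the member of the join at time `i L`. -/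
lemma exists_word_of_mem_iterJoin {m : ℕ} (hm : 0 < m) (hL : 0 < L) {V : Set (orbitClosure f)}
    (hV : V ∈ iterJoin (shiftOn f) (wordCylinder f W L '' ↑T) (m * L)) :
    ∃ w, V ⊆ wordCylinder f W (m * L) w ∧ IsTiledBy T L m w := by
  obtain ⟨u, hu, rfl⟩ := hV
  have hiL : ∀ i < m, i * L < m * L := fun i hi => Nat.mul_lt_mul_of_pos_right hi hL
  have hblock : ∀ i : Fin m, ∃ v ∈ T, wordCylinder f W L v = u ⟨i * L, hiL i i.2⟩ :=
    fun i => hu _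
  choose v hvT hv using hblock
  let block : ℕ → Fin m := fun p => ⟨min (p / L) (m - 1), by omega⟩
  have hblock_eq : ∀ i (hi : i < m), ∀ r < L,
      block (i * L + r) = ⟨i, hi⟩ ∧ (i * L + r) % L = r := fun i hi r hr => by
    have hdiv : (i * L + r) / L = i := by
      rw [add_comm, Nat.add_mul_div_right _ _ hL, Nat.div_eq_of_lt hr, zero_add]
    refine ⟨Fin.ext ?_, by rw [add_comm, Nat.add_mul_mod_self_right, Nat.mod_eq_of_lt hr]⟩
    simp only [block, hdiv]
    omega
  refine ⟨fun p => v (block p) (p % L), fun ω hω p hp => ?_, fun i hi => ⟨v ⟨i, hi⟩, hvT _,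
    fun r hr => by simp only [(hblock_eq i hi r hr).1, (hblock_eq i hi r hr).2]⟩⟩
  have hi : p / L < m := (Nat.div_lt_iff_lt_mul hL).2 hp
  have hωu := mem_iInter.1 hω ⟨p / L * L, hiL _ hi⟩
  rw [mem_preimage, ← hv ⟨p / L, hi⟩] at hωu
  have := hωu (p % L) (Nat.mod_lt _ hL)
  rw [iterate_shiftOn_apply, Nat.mod_add_div'] at this
  have hb := (hblock_eq (p / L) hi (p % L) (Nat.mod_lt _ hL)).1
  rw [Nat.div_add_mod'] at hb
  simpa only [hb] using this

/-- Since `AE f < c`, some join of the cylinders of `T` has a subcover with at most `exp (c n)`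
members, and each member yields a word of length `n = m L`. -/
lemma exists_refinement [CompactSpace X] (hW : ∀ b, IsOpen (W b)) (hL : 0 < L)
    (hT : IsWordCover f W L T) {c : ℝ} (hc : AE f < c) :
    ∃ m > 0, ∃ T' : Finset (ℕ → β), IsWordCover f W (m * L) T' ∧
      (T'.card : ℝ) ≤ exp (c * (m * L)) ∧ ∀ w ∈ T', IsTiledBy T L m w := by
  classical
  have h𝒱 := hT.isOpenCover hW
  obtain ⟨n₀, hn₀⟩ :=
    (eventually_coverNum_le_exp
      ((coverEntropy_le_entropy h𝒱).trans_lt hc)).exists_forall_of_atTop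
  obtain ⟨F, hF𝒱, hFcov, hFcard⟩ :=
    exists_finset_card_eq_coverNum (h𝒱.iterJoin (continuous_shiftOn f) ((n₀ + 1) * L))
  have hword : ∀ V : F, ∃ w, (V : Set (orbitClosure f)) ⊆ wordCylinder f W ((n₀ + 1) * L) w ∧
      IsTiledBy T L (n₀ + 1) w := fun V =>
    exists_word_of_mem_iterJoin n₀.succ_pos hL (hF𝒱 V.2)
  choose w hwV hwT using hword
  refine ⟨n₀ + 1, n₀.succ_pos, Finset.univ.image w, fun ω => ?_, ?_, ?_⟩
  · obtain ⟨V, hV, hωV⟩ := mem_sUnion.1 (hFcov.symm ▸ mem_univ ω)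
    exact ⟨w ⟨V, hV⟩, Finset.mem_image_of_mem _ (Finset.mem_univ _), hwV _ hωV⟩
  · calc ((Finset.univ.image w).card : ℝ) ≤ coverNum
          (iterJoin (shiftOn f) (wordCylinder f W L '' ↑T) ((n₀ + 1) * L)) := by
          rw [← hFcard]; exact_mod_cast Finset.card_image_le.trans (by simp)
      _ ≤ exp (c * ((n₀ + 1) * L : ℕ)) := hn₀ _ (by nlinarith)
      _ = exp (c * ((n₀ + 1 : ℕ) * L)) := by push_cast; ring_nf
  · simp only [Finset.mem_image, Finset.mem_univ, true_and]
    rintro _ ⟨V, rfl⟩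
    exact hwT V

lemma exists_tower [CompactSpace X] [Fintype β] (hW : ∀ b, IsOpen (W b))
    (hcov : ∀ x, ∃ b, x ∈ W b) {c : ℝ} (hc : AE f ≤ c) :
    ∃ (L : ℕ → ℕ) (T : ℕ → Finset (ℕ → β)), (∀ k, 0 < L k) ∧
      (∀ k, IsWordCover f W (L k) (T k)) ∧ ∀ k,
        ((T (k + 1)).card : ℝ) ≤ exp ((c + 1 / (k + 1)) * L (k + 1)) ∧
        ∃ m, L (k + 1) = m * L k ∧ ∀ w ∈ T (k + 1), IsTiledBy (T k) (L k) m w := by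
  classical
  let T₀ : Finset (ℕ → β) := Finset.univ.image (Function.const ℕ)
  have h₀ : 0 < (1, T₀).1 ∧ IsWordCover f W 1 T₀ := ⟨one_pos, fun ω => by
    obtain ⟨b, hb⟩ := hcov (ω.1 0)
    exact ⟨Function.const ℕ b, Finset.mem_image_of_mem _ (Finset.mem_univ b), fun j hj => by
      rwa [Nat.lt_one_iff.1 hj]⟩⟩
  obtain ⟨g, hg⟩ := exists_seq_of_forall_exists
    (P := fun a : ℕ × Finset (ℕ → β) => 0 < a.1 ∧ IsWordCover f W a.1 a.2)
    (R := fun k a b => (b.2.card : ℝ) ≤ exp ((c + 1 / (k + 1)) * b.1) ∧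
      ∃ m, b.1 = m * a.1 ∧ ∀ w ∈ b.2, IsTiledBy a.2 a.1 m w) h₀ fun k a ha => by
    have hck : AE f < ((c + 1 / (k + 1) : ℝ) : EReal) :=
      hc.trans_lt (EReal.coe_lt_coe_iff.2 (lt_add_of_pos_right c (by positivity)))
    obtain ⟨m, hm, T', hT', hcard, htiled⟩ := exists_refinement hW ha.1 ha.2 hck
    exact ⟨(m * a.1, T'), ⟨Nat.mul_pos hm ha.1, hT'⟩, by push_cast; exact hcard, m, rfl, htiled⟩
  exact ⟨fun k => (g k).1, fun k => (g k).2, fun k => (hg k).1.1, fun k => (hg k).1.2,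
    fun k => (hg k).2⟩

end Coding

theorem exists_coding_isTiledAtRate {X β : Type*} [TopologicalSpace X] [CompactSpace X]
    [Fintype β] {f : ℕ → X} {W : β → Set X} (hW : ∀ b, IsOpen (W b))
    (hcov : ∀ x, ∃ b, x ∈ W b) {c : ℝ} (hc : AE f ≤ c) :
    ∃ t : ℕ → β, (∀ n, f n ∈ W (t n)) ∧ IsTiledAtRate t c := by
  classical
  obtain ⟨L, T, hL, hcover, htower⟩ := exists_tower hW hcov hc
  let M : ℕ → ℕ := fun k => ∑ j ∈ Finset.range k, L j
  have hM : ∀ k, M (k + 1) = M k + L k := fun k => Finset.sum_range_succ L k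
  choose w hwT hw using fun k => hcover k ⟨_, orbit_mem_orbitClosure f (M k)⟩
  obtain ⟨t, ht⟩ := exists_seq_eq_on_segments hL (Finset.sum_range_zero L) hM w
  refine ⟨t, fun n => ?_, fun δ hδ => ?_⟩
  · obtain ⟨k, r, hr, rfl⟩ := exists_segment hL (Finset.sum_range_zero L) hM n
    rw [ht k r hr]
    exact hw k r hr
  · obtain ⟨k, hk⟩ := exists_nat_one_div_lt hδ
    refine ⟨L (k + 1), hL _, M (k + 1), (T (k + 1)).image (window · 0 (L (k + 1))), ?_,
      fun i => ?_⟩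
    · calc (((T (k + 1)).image (window · 0 (L (k + 1)))).card : ℝ) ≤ (T (k + 1)).card := by
            exact_mod_cast Finset.card_image_le
        _ ≤ exp ((c + 1 / (k + 1)) * L (k + 1)) := (htower k).1
        _ ≤ exp ((c + δ) * L (k + 1)) :=
            exp_le_exp.2 (mul_le_mul_of_nonneg_right (by linarith) (Nat.cast_nonneg _))
    · obtain ⟨N, hiN, -, htiled⟩ :=
        isTiledBy_tail_of_tower hL hM (fun k => (htower k).2) hwT ht (k + 1) (i + 1)
      obtain ⟨v, hv, htv⟩ := htiled i hiN
      exact Finset.mem_image.2 ⟨v, hv, funext fun r => by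
        simp only [window, zero_add, ← htv r r.2, add_assoc]⟩

end Anqie

theorem exists_zero_one_interpolation_low_entropy_general {X : Type*} [TopologicalSpace X]
    [CompactSpace X] (f : ℕ → X) (lam : ℝ) (hlam : 0 ≤ lam)
    (hAE : Anqie.AE f = (lam : EReal)) (U K : Set X) (hU : IsOpen U) (hK : IsClosed K)
    (hKU : K ⊆ U) :
    ∃ C : Set ℕ, f ⁻¹' K ⊆ C ∧ C ⊆ f ⁻¹' U ∧
      Anqie.AE (C.indicator fun _ => (1 : ℂ)) ≤ (lam : EReal) := by
  obtain ⟨t, hft, ht⟩ := Anqie.exists_coding_isTiledAtRate (W := fun b => cond b U Kᶜ)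
    (by rintro (_ | _) <;> simp [hU, hK.isOpen_compl])
    (fun x => by by_cases hx : x ∈ K; exacts [⟨true, hKU hx⟩, ⟨false, hx⟩]) hAE.le
  have hind : {n | t n = true}.indicator (fun _ => (1 : ℂ)) = (fun b => cond b 1 0) ∘ t := by
    funext n
    cases h : t n <;> simp [h]
  refine ⟨{n | t n = true}, fun n hn => ?_, fun n hn => ?_, ?_⟩
  · by_contra h
    have htn : t n = false := by simpa using h
    exact (by simpa [htn] using hft n : f n ∉ K) hn
  · simpa [show t n = true from hn] using hft n
  · rw [hind]
    exact Anqie.AE_le_of_isTiledAtRate ((finite_range _).subset (range_comp_subset_range _ _))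
      hlam (ht.comp _)

/-- Let `X` be a compact Hausdorff space and `f : ℕ → X` with
`AE(f) = λ`, `0 ≤ λ < +∞`. For `U ⊆ X` open and `K ⊆ U` closed, there is a set
`C ⊆ ℕ` with `f⁻¹(K) ⊆ C ⊆ f⁻¹(U)` whose characteristic function satisfies
`AE(χ_C) ≤ λ`. -/
theorem exists_zero_one_interpolation_low_entropy {X : Type*} [TopologicalSpace X]
    [CompactSpace X] [T2Space X] (f : ℕ → X) (lam : ℝ) (hlam : 0 ≤ lam)
    (hAE : Anqie.AE f = (lam : EReal)) (U K : Set X) (hU : IsOpen U) (hK : IsClosed K)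
    (hKU : K ⊆ U) :
    ∃ C : Set ℕ, f ⁻¹' K ⊆ C ∧ C ⊆ f ⁻¹' U ∧
      Anqie.AE (C.indicator fun _ => (1 : ℂ)) ≤ (lam : EReal) :=
  exists_zero_one_interpolation_low_entropy_general f lam hlam hAE U K hU hK hKU
end
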